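/- arXiv:2412.19258 — 6 statements merged into one kernel-verified Lean document; each statement's English description precedes it below -/
import Mathlib

section
/- Let G and H be nontrivial connected graphs. Every connected cycle convex set S in the Cartesian product G □ H is a sub-product, i.e., S = π_G(S) × π_H(S), where π_G and π_H are the projections onto the factors. -/
/-!
A vertex outside a connected cycle convex set `S` has at most one neighbour in `S`: two
neighbours joined by a path inside `S` would close a cycle through it. Now let `(c, y)` and
`(x, d)` be joined by a walk in `S`, and argue by induction on its length. If `(c, d) ∉ S`, the
induction hypothesis applied to the walk minus its first edge forces that edge to go to some
`(a, y)` with `a ~ c` and gives `(a, d) ∈ S`; symmetrically at the last edge, `(c, b) ∈ S` with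
`b ~ d`. These are two distinct neighbours of `(c, d)` in `S`.
-/

open SimpleGraph

variable {V α β : Type*}

/-- A set `S` is cycle convex in `G` if no vertex outside `S` lies on a cycle in the
subgraph induced by `S ∪ {w}`. -/
def CycleConvex (G : SimpleGraph V) (S : Set V) : Prop :=
  ∀ w : V, w ∉ S →
    ∀ c : (G.induce (insert w S)).Walk ⟨w, Set.mem_insert w S⟩ ⟨w, Set.mem_insert w S⟩,
      ¬ c.IsCycle

/-- The cycle convex hull of `S`: the smallest cycle convex set containing `S`. -/
def cycleHull (G : SimpleGraph V) (S : Set V) : Set V :=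
  ⋂₀ {T : Set V | S ⊆ T ∧ CycleConvex G T}

/-- The cycle hull number: minimum size of a set whose cycle convex hull is everything. -/
noncomputable def cycleHullNumber (G : SimpleGraph V) : ℕ :=
  sInf {n : ℕ | ∃ S : Set V, S.ncard = n ∧ cycleHull G S = Set.univ}

/-- The cycle convexity number: maximum size of a proper cycle convex set. -/
noncomputable def cycleConvexityNumber (G : SimpleGraph V) : ℕ :=
  sSup {n : ℕ | ∃ S : Set V, S.ncard = n ∧ CycleConvex G S ∧ S ≠ Set.univ}

/-- The independence number of a graph. -/
noncomputable def indepNumber (G : SimpleGraph V) : ℕ :=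
  sSup {n : ℕ | ∃ S : Set V, S.ncard = n ∧ S.Pairwise fun a b => ¬ G.Adj a b}

/-- The strong product of two simple graphs. -/
def strongProd (G : SimpleGraph α) (H : SimpleGraph β) : SimpleGraph (α × β) where
  Adj x y := (G.Adj x.1 y.1 ∧ x.2 = y.2) ∨ (x.1 = y.1 ∧ H.Adj x.2 y.2) ∨
    (G.Adj x.1 y.1 ∧ H.Adj x.2 y.2)
  symm := ⟨fun x y h => by
    rcases h with ⟨h1, h2⟩ | ⟨h1, h2⟩ | ⟨h1, h2⟩
    · exact Or.inl ⟨h1.symm, h2.symm⟩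
    · exact Or.inr (Or.inl ⟨h1.symm, h2.symm⟩)
    · exact Or.inr (Or.inr ⟨h1.symm, h2.symm⟩)⟩
  loopless := ⟨fun x h => by
    rcases h with ⟨h1, _⟩ | ⟨_, h2⟩ | ⟨h1, _⟩
    · exact G.loopless.irrefl _ h1
    · exact H.loopless.irrefl _ h2
    · exact G.loopless.irrefl _ h1⟩

/-- The lexicographic product of two simple graphs. -/
def lexProd (G : SimpleGraph α) (H : SimpleGraph β) : SimpleGraph (α × β) where
  Adj x y := G.Adj x.1 y.1 ∨ (x.1 = y.1 ∧ H.Adj x.2 y.2)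
  symm := ⟨fun x y h => by
    rcases h with h1 | ⟨h1, h2⟩
    · exact Or.inl h1.symm
    · exact Or.inr ⟨h1.symm, h2.symm⟩⟩
  loopless := ⟨fun x h => by
    rcases h with h1 | ⟨_, h2⟩
    · exact G.loopless.irrefl _ h1
    · exact H.loopless.irrefl _ h2⟩

namespace SimpleGraph.Walk

variable {G : SimpleGraph V} {u v w : V}

lemma IsPath.isCycle_cons_concat {p : G.Walk u v} (hp : p.IsPath) (huv : u ≠ v)
    (hw : w ∉ p.support) (hwu : G.Adj w u) (hvw : G.Adj v w) :
    (cons hwu (p.concat hvw)).IsCycle := by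
  refine (cons_isCycle_iff _ _).mpr ⟨hp.concat hw hvw, fun he => ?_⟩
  rw [edges_concat, List.concat_eq_append, List.mem_append, List.mem_singleton, Sym2.eq_iff] at he
  rcases he with he | ⟨rfl, rfl⟩ | ⟨-, rfl⟩
  · exact hw (p.fst_mem_support_of_mem_edges he)
  · exact hvw.ne rfl
  · exact huv rfl

end SimpleGraph.Walk

theorem CycleConvex.eq_of_adj_of_adj {G : SimpleGraph V} {S : Set V} (hS : CycleConvex G S)
    {w u v : V} (hw : w ∉ S) (hu : u ∈ S) (hv : v ∈ S)
    (huv : (G.induce S).Reachable ⟨u, hu⟩ ⟨v, hv⟩) (hwu : G.Adj w u) (hwv : G.Adj w v) :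
    u = v := by
  by_contra hne
  obtain ⟨p, hp⟩ := huv.exists_isPath
  let ι := G.induceHomOfLE (Set.subset_insert w S)
  have hw' : (⟨w, Set.mem_insert w S⟩ : ↥(insert w S)) ∉ (p.map ι.toHom).support := by
    simp only [Walk.support_map, List.mem_map, not_exists, not_and]
    exact fun x _ hx => hw (congrArg Subtype.val hx ▸ x.2 :)
  exact hS w hw _ <| (hp.map ι.injective).isCycle_cons_concat
    (fun h => hne (congrArg Subtype.val h)) hw' (v := ⟨v, Set.mem_insert_of_mem w hv⟩)
    (hwu : (G.induce (insert w S)).Adj ⟨w, Set.mem_insert w S⟩ ⟨u, Set.mem_insert_of_mem w hu⟩)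
    hwv.symm

theorem CycleConvex.mk_fst_snd_mem_of_walk {G : SimpleGraph α} {H : SimpleGraph β}
    {S : Set (α × β)} (hS : CycleConvex (G □ H) S) (hconn : ((G □ H).induce S).Preconnected)
    {u v : S} (p : ((G □ H).induce S).Walk u v) : ((u : α × β).1, (v : α × β).2) ∈ S := by
  induction hn : p.length using Nat.strong_induction_on generalizing u v with
  | _ n ih =>
  by_contra hout
  have hfirst : ∃ a, G.Adj (u : α × β).1 a ∧ (a, (v : α × β).2) ∈ S := by
    cases p with
    | nil => exact (hout u.2).elim
    | cons h q =>
      rcases boxProd_adj.mp h with ⟨hG, -⟩ | ⟨-, hfst⟩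
      · exact ⟨_, hG, ih q.length (by simp [← hn]) q rfl⟩
      · exact (hout (hfst ▸ ih q.length (by simp [← hn]) q rfl)).elim
  have hlast : ∃ b, H.Adj (v : α × β).2 b ∧ ((u : α × β).1, b) ∈ S := by
    cases hr : p.reverse with
    | nil => exact (hout u.2).elim
    | cons h q =>
      have hq : q.length < n := by
        rw [← hn, ← p.length_reverse, hr, Walk.length_cons]
        exact q.length.lt_succ_self
      rcases boxProd_adj.mp h with ⟨-, hsnd⟩ | ⟨hH, -⟩
      · exact (hout (hsnd ▸ ih _ hq q.reverse q.length_reverse)).elim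
      · exact ⟨_, hH, ih _ hq q.reverse q.length_reverse⟩
  obtain ⟨a, hca, hadS⟩ := hfirst
  obtain ⟨b, hdb, hcbS⟩ := hlast
  have heq := hS.eq_of_adj_of_adj hout hadS hcbS (hconn _ _)
    (boxProd_adj.mpr (.inl ⟨hca, rfl⟩)) (boxProd_adj.mpr (.inr ⟨hdb, rfl⟩))
  exact hca.ne (congrArg Prod.fst heq).symm

theorem stmt_2_general (G : SimpleGraph α) (H : SimpleGraph β)
    (S : Set (α × β)) (hconv : CycleConvex (G □ H) S)
    (hSconn : ((G □ H).induce S).Connected) :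
    S = (Prod.fst '' S) ×ˢ (Prod.snd '' S) := by
  refine Set.Subset.antisymm Set.subset_fst_image_prod_snd_image ?_
  rintro ⟨a, b⟩ ⟨⟨u, hu, rfl⟩, ⟨v, hv, rfl⟩⟩
  exact hconv.mk_fst_snd_mem_of_walk hSconn.preconnected
    (hSconn.preconnected ⟨u, hu⟩ ⟨v, hv⟩).some

theorem stmt_2 [Fintype α] [Fintype β] (G : SimpleGraph α) (H : SimpleGraph β)
    [Nontrivial α] [Nontrivial β] (hG : G.Connected) (hH : H.Connected)
    (S : Set (α × β)) (hconv : CycleConvex (G □ H) S)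
    (hSconn : ((G □ H).induce S).Connected) :
    S = (Prod.fst '' S) ×ˢ (Prod.snd '' S) :=
  stmt_2_general G H S hconv hSconn
end

section
/- Let G and H be nontrivial connected graphs. If S is a cycle hull set of the Cartesian product G □ H (i.e., the cycle convex hull of S equals V(G□H)), then the projection π_G(S) is a cycle hull set of G and the projection π_H(S) is a cycle hull set of H. -/
open SimpleGraph

variable {V α β : Type*}

/-!
If `T` is cycle convex in `G`, then so is `T ×ˢ univ` in `G □ H`. Indeed, a vertex `(g, h)` with
`g ∉ T` can only have neighbours in `T ×ˢ univ` of the form `(g', h)` with `g'` adjacent to `g`,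
so a cycle through `(g, h)` inside `insert (g, h) (T ×ˢ univ)` leaves it towards two such
neighbours with distinct first coordinates, joined by a walk in `T ×ˢ univ`. Projecting that walk
to `G` joins two distinct neighbours of `g` inside `T`, which closes a cycle through `g`.
Hence `cycleHull (G □ H) S ⊆ cycleHull G (Prod.fst '' S) ×ˢ univ`, and symmetrically for `H`.
-/

namespace SimpleGraph.Walk

variable {V' : Type*} {G : SimpleGraph V} {G' : SimpleGraph V'}

theorem IsCycle.exists_adj_adj_walk_notMem_support {w : V} {c : G.Walk w w} (hc : c.IsCycle) :
    ∃ (a b : V) (q : G.Walk a b), a ≠ b ∧ G.Adj w a ∧ G.Adj w b ∧ w ∉ q.support := by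
  cases c with
  | nil => exact absurd hc not_isCycle_nil
  | @cons _ b _ hwb q =>
    obtain ⟨hq, hwb_notMem⟩ := (cons_isCycle_iff q hwb).1 hc
    have hqr : q.reverse.IsPath := hq.reverse
    have hqr_edges : q.reverse.edges = q.edges.reverse := edges_reverse q
    generalize q.reverse = r at hqr hqr_edges
    cases r with
    | nil => exact absurd rfl hwb.ne
    | @cons _ a _ hwa q' =>
      obtain ⟨-, hw⟩ := (cons_isPath_iff hwa q').1 hqr
      refine ⟨a, b, q', ?_, hwa, hwb, hw⟩
      rintro rfl
      have : s(w, a) ∈ q.edges.reverse := hqr_edges ▸ by simp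
      exact hwb_notMem (List.mem_reverse.1 this)

theorem exists_walk_support_subset_map {p : V' → V}
    (hp : ∀ x y, G'.Adj x y → p x = p y ∨ G.Adj (p x) (p y)) {a b : V'} :
    ∀ q : G'.Walk a b, ∃ r : G.Walk (p a) (p b), r.support ⊆ q.support.map p
  | nil => ⟨nil, by simp⟩
  | cons hab q => by
    obtain ⟨r, hr⟩ := exists_walk_support_subset_map hp q
    rcases hp _ _ hab with h | h
    · exact ⟨r.copy h.symm rfl, by
      rw [support_copy]; exact fun z hz => List.mem_cons_of_mem _ (hr hz)⟩
    · exact ⟨cons h r, by simpa using List.cons_subset_cons _ hr⟩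

end SimpleGraph.Walk

section CycleConvex

variable {G : SimpleGraph V} {S T : Set V}

theorem CycleConvex.sInter {𝒯 : Set (Set V)} (h : ∀ T ∈ 𝒯, CycleConvex G T) :
    CycleConvex G (⋂₀ 𝒯) := by
  intro w hw c hc
  obtain ⟨T, hT, hwT⟩ : ∃ T ∈ 𝒯, w ∉ T := by simpa using hw
  have hsub : insert w (⋂₀ 𝒯) ⊆ insert w T :=
    Set.insert_subset_insert (Set.sInter_subset_of_mem hT)
  let f := G.induceHomOfLE hsub
  exact h T hT w hwT (c.map f.toHom) (hc.map f.injective)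

theorem cycleConvex_cycleHull : CycleConvex G (cycleHull G S) :=
  CycleConvex.sInter fun _ hT => hT.2

theorem subset_cycleHull : S ⊆ cycleHull G S :=
  Set.subset_sInter fun _ hT => hT.1

theorem cycleHull_subset (hST : S ⊆ T) (hT : CycleConvex G T) : cycleHull G S ⊆ T :=
  Set.sInter_subset_of_mem ⟨hST, hT⟩

theorem cycleConvex_iff : CycleConvex G T ↔ ∀ w ∉ T, ∀ a b, a ≠ b → G.Adj w a → G.Adj w b →
    ∀ q : G.Walk a b, ¬ ∀ z ∈ q.support, z ∈ T := by
  constructor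
  · intro hT w hw a b hab hwa hwb q hq
    classical
    have hP : ∀ z ∈ q.bypass.support, z ∈ T :=
      fun z hz => hq z (q.support_bypass_subset_support hz)
    let C := Walk.cons hwa (q.bypass.concat hwb.symm)
    have hC : C.IsCycle := by
      refine (Walk.cons_isCycle_iff _ _).2 ⟨q.bypass_isPath.concat (fun h => hw (hP w h)) _, ?_⟩
      rw [Walk.edges_concat, List.concat_eq_append, List.mem_append, List.mem_singleton, not_or]
      refine ⟨fun h => hw (hP w (Walk.fst_mem_support_of_mem_edges _ h)), ?_⟩
      rw [Sym2.eq_iff]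
      rintro (⟨rfl, -⟩ | ⟨-, rfl⟩)
      exacts [hw (hP w q.bypass.end_mem_support), hab rfl]
    have hCT : ∀ z ∈ C.support, z ∈ insert w T := by
      intro z hz
      simp only [C, Walk.support_cons, Walk.support_concat, List.mem_cons,
        List.mem_append, List.not_mem_nil, or_false] at hz
      rcases hz with rfl | hz | rfl
      exacts [Set.mem_insert _ _, Set.mem_insert_of_mem _ (hP z hz), Set.mem_insert _ _]
    refine hT w hw (C.induce _ hCT) ?_
    have he : Function.Injective (Embedding.induce (G := G) (insert w T)).toHom :=
      Subtype.val_injective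
    rwa [← Walk.isCycle_map_iff_of_injective he, Walk.map_induce]
  · intro h w hw c hc
    obtain ⟨a, b, q, hab, hwa, hwb, hwq⟩ := hc.exists_adj_adj_walk_notMem_support
    refine h w hw a b (Subtype.coe_injective.ne hab) hwa hwb (q.map (Embedding.induce _).toHom) ?_
    intro z hz
    obtain ⟨z, hzq, rfl⟩ := List.mem_map.1 ((Walk.support_map _ _) ▸ hz)
    exact (Set.mem_insert_iff.1 z.2).resolve_left fun h =>
      hwq ((Subtype.ext h : z = ⟨w, Set.mem_insert w T⟩) ▸ hzq)

end CycleConvex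

section Preimage

variable {V' : Type*} {G : SimpleGraph V} {G' : SimpleGraph V'} {p : V' → V}

theorem CycleConvex.preimage (hadj : ∀ x y, G'.Adj x y → p x = p y ∨ G.Adj (p x) (p y))
    (hinj : ∀ w x y, G'.Adj w x → G'.Adj w y → p w ≠ p x → p x = p y → x = y)
    {T : Set V} (hT : CycleConvex G T) : CycleConvex G' (p ⁻¹' T) := by
  rw [cycleConvex_iff] at hT ⊢
  intro w hw a b hab hwa hwb q hq
  obtain ⟨r, hr⟩ := Walk.exists_walk_support_subset_map hadj q
  have hpr : ∀ z ∈ r.support, z ∈ T := fun z hz => by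
    obtain ⟨x, hx, rfl⟩ := List.mem_map.1 (hr hz)
    exact hq x hx
  have hne {x : V'} (hx : p x ∈ T) : p w ≠ p x := fun h => hw (show p w ∈ T from h ▸ hx)
  have hpa := hne (hq a q.start_mem_support)
  have hpb := hne (hq b q.end_mem_support)
  exact hT (p w) hw (p a) (p b) (fun h => hab (hinj w a b hwa hwb hpa h))
    ((hadj w a hwa).resolve_left hpa) ((hadj w b hwb).resolve_left hpb) r hpr

theorem cycleHull_image_eq_univ (hadj : ∀ x y, G'.Adj x y → p x = p y ∨ G.Adj (p x) (p y))
    (hinj : ∀ w x y, G'.Adj w x → G'.Adj w y → p w ≠ p x → p x = p y → x = y)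
    (hp : Function.Surjective p) {S : Set V'} (hS : cycleHull G' S = Set.univ) :
    cycleHull G (p '' S) = Set.univ := by
  have hsub : cycleHull G' S ⊆ p ⁻¹' cycleHull G (p '' S) :=
    cycleHull_subset (fun x hx => subset_cycleHull (Set.mem_image_of_mem p hx))
      (cycleConvex_cycleHull.preimage hadj hinj)
  rw [hS, Set.univ_subset_iff, Set.preimage_eq_univ_iff] at hsub
  rwa [hp.range_eq, Set.univ_subset_iff] at hsub

end Preimage

section BoxProd

variable {G : SimpleGraph α} {H : SimpleGraph β}

theorem boxProd_adj_fst_eq_or_adj (x y : α × β) (h : (G □ H).Adj x y) :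
    x.1 = y.1 ∨ G.Adj x.1 y.1 := by
  rw [boxProd_adj] at h
  tauto

theorem boxProd_adj_snd_eq_or_adj (x y : α × β) (h : (G □ H).Adj x y) :
    x.2 = y.2 ∨ H.Adj x.2 y.2 := by
  rw [boxProd_adj] at h
  tauto

theorem boxProd_eq_of_adj_of_fst_ne {w x y : α × β}
    (hx : (G □ H).Adj w x) (hy : (G □ H).Adj w y)
    (hwx : w.1 ≠ x.1) (hxy : x.1 = y.1) : x = y := by
  rw [boxProd_adj] at hx hy
  grind

theorem boxProd_eq_of_adj_of_snd_ne {w x y : α × β}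
    (hx : (G □ H).Adj w x) (hy : (G □ H).Adj w y)
    (hwx : w.2 ≠ x.2) (hxy : x.2 = y.2) : x = y := by
  rw [boxProd_adj] at hx hy
  grind

end BoxProd

theorem stmt_5_general (G : SimpleGraph α) (H : SimpleGraph β)
    [Nontrivial α] [Nontrivial β]
    (S : Set (α × β)) (hS : cycleHull (G □ H) S = Set.univ) :
    cycleHull G (Prod.fst '' S) = Set.univ ∧ cycleHull H (Prod.snd '' S) = Set.univ :=
  ⟨cycleHull_image_eq_univ boxProd_adj_fst_eq_or_adj (fun _ _ _ => boxProd_eq_of_adj_of_fst_ne)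
      Prod.fst_surjective hS,
    cycleHull_image_eq_univ boxProd_adj_snd_eq_or_adj (fun _ _ _ => boxProd_eq_of_adj_of_snd_ne)
      Prod.snd_surjective hS⟩

theorem stmt_5 [Fintype α] [Fintype β] (G : SimpleGraph α) (H : SimpleGraph β)
    [Nontrivial α] [Nontrivial β] (hG : G.Connected) (hH : H.Connected)
    (S : Set (α × β)) (hS : cycleHull (G □ H) S = Set.univ) :
    cycleHull G (Prod.fst '' S) = Set.univ ∧ cycleHull H (Prod.snd '' S) = Set.univ :=
  stmt_5_general G H S hS
end

section
/- Let G and H be nontrivial connected graphs with m = |V(G)| and n = |V(H)|. Then the cycle convexity number of the Cartesian product satisfies C_cc(G □ H) = max{n · C_cc(G), m · C_cc(H)}. -/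
open SimpleGraph

variable {V α β : Type*}

set_option linter.unusedSectionVars false
set_option linter.unusedVariables false

section AuxA
variable {V : Type*} {G : SimpleGraph V} {S : Set V} {w : V}


lemma reach_of_avoid {x y : ↥(insert w S)} (r : (G.induce (insert w S)).Walk x y) :
    (∀ z ∈ r.support, (z : V) ≠ w) → ∀ (hx : (x : V) ∈ S) (hy : (y : V) ∈ S),
      (G.induce S).Reachable ⟨x, hx⟩ ⟨y, hy⟩ := by
  induction r with
  | nil => intro _ hx hy; exact Reachable.refl _
  | @cons a z b h r ih =>
    intro hsup hx hy
    have hzw : (z : V) ≠ w := hsup z (by simp [Walk.support_cons])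
    have hz : (z : V) ∈ S := by
      rcases z.2 with h' | h'
      · exact absurd h' hzw
      · exact h'
    have hadj : (G.induce S).Adj ⟨a, hx⟩ ⟨z, hz⟩ := h
    exact (hadj.reachable).trans (ih (fun t ht => hsup t (by simp [Walk.support_cons, ht])) hz hy)

/-- A convenient reformulation of cycle-convexity via pairs of neighbors. -/
def Good (G : SimpleGraph V) (S : Set V) : Prop :=
  ∀ w ∉ S, ∀ u v (hu : u ∈ S) (hv : v ∈ S), u ≠ v → G.Adj w u → G.Adj w v →
    ¬ (G.induce S).Reachable ⟨u, hu⟩ ⟨v, hv⟩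

lemma exists_cycle_of (hw : w ∉ S) {u v : V} (hu : u ∈ S) (hv : v ∈ S) (huv : u ≠ v)
    (hau : G.Adj w u) (hav : G.Adj w v)
    (hreach : (G.induce S).Reachable ⟨u, hu⟩ ⟨v, hv⟩) :
    ∃ c : (G.induce (insert w S)).Walk ⟨w, Set.mem_insert w S⟩ ⟨w, Set.mem_insert w S⟩,
      c.IsCycle := by
  classical
  obtain ⟨q0⟩ := hreach
  let f : G.induce S →g G.induce (insert w S) :=
    ⟨fun x => ⟨x.1, Set.mem_insert_of_mem _ x.2⟩, fun h => h⟩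
  set w' : ↥(insert w S) := ⟨w, Set.mem_insert w S⟩ with hw'
  set u' : ↥(insert w S) := ⟨u, Set.mem_insert_of_mem _ hu⟩ with hu'
  set v' : ↥(insert w S) := ⟨v, Set.mem_insert_of_mem _ hv⟩ with hv'
  have hq : (q0.map f).toPath.1.IsPath := (q0.map f).toPath.2
  set p : (G.induce (insert w S)).Walk u' v' := (q0.map f).toPath.1 with hp
  have hwp : w' ∉ p.support := by
    intro hmem
    have := (q0.map f).support_toPath_subset hmem
    rw [Walk.support_map] at this
    obtain ⟨z, hz, hze⟩ := List.mem_map.mp this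
    have : w ∈ S := by
      have : (z : V) ∈ S := z.2
      rw [show (z:V) = w from congrArg Subtype.val hze] at this
      exact this
    exact hw this
  have hwu' : (G.induce (insert w S)).Adj w' u' := hau
  have hvw' : (G.induce (insert w S)).Adj v' w' := hav.symm
  refine ⟨Walk.cons hwu' (p.append (Walk.cons hvw' Walk.nil)), ?_⟩
  rw [Walk.cons_isCycle_iff]
  constructor
  · rw [Walk.isPath_def, Walk.support_append, Walk.support_cons, Walk.support_nil]
    simp only [List.tail_cons]
    rw [List.nodup_append]
    refine ⟨hq.support_nodup, List.nodup_singleton _, ?_⟩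
    intro z hz b hb
    rw [List.mem_singleton] at hb
    subst hb
    exact fun e => hwp (e ▸ hz)
  · intro hmem
    rw [Walk.edges_append, Walk.edges_cons, Walk.edges_nil, List.mem_append] at hmem
    rcases hmem with hmem | hmem
    · exact hwp (p.fst_mem_support_of_mem_edges hmem)
    · rw [List.mem_singleton, Sym2.eq_iff] at hmem
      rcases hmem with ⟨h1, h2⟩ | ⟨h1, h2⟩
      · have h3 : u = w := congrArg Subtype.val h2
        exact hw (h3 ▸ hu)
      · exact huv (congrArg Subtype.val h2)

lemma neighbors_of_cycle (hw : w ∉ S)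
    (c : (G.induce (insert w S)).Walk ⟨w, Set.mem_insert w S⟩ ⟨w, Set.mem_insert w S⟩)
    (hc : c.IsCycle) :
    ∃ (u v : V) (hu : u ∈ S) (hv : v ∈ S), u ≠ v ∧ G.Adj w u ∧ G.Adj w v ∧
      (G.induce S).Reachable ⟨u, hu⟩ ⟨v, hv⟩ := by
  revert hc
  cases c with
  | nil => intro hc; exact absurd rfl hc.ne_nil
  | @cons _ u' _ h p =>
    intro hc
    rw [Walk.cons_isCycle_iff] at hc
    obtain ⟨hp, hedge⟩ := hc
    have hne : (⟨w, Set.mem_insert w S⟩ : ↥(insert w S)) ≠ u' := h.ne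
    obtain ⟨v', h2, r, hre⟩ := p.reverse.exists_eq_cons_of_ne hne
    have hrevpath := hp.reverse
    rw [hre, Walk.cons_isPath_iff] at hrevpath
    obtain ⟨hrpath, hwr⟩ := hrevpath
    have hval : ∀ z : ↥(insert w S), z ≠ (⟨w, Set.mem_insert w S⟩ : ↥(insert w S)) →
        (z : V) ∈ S := by
      intro z hz
      rcases z.2 with h' | h'
      · exact absurd (Subtype.ext h') hz
      · exact h'
    have huS : (u' : V) ∈ S := hval u' (Ne.symm hne)
    have hvS : (v' : V) ∈ S := hval v' h2.ne'
    have huv : u' ≠ v' := by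
      intro e
      subst e
      apply hedge
      have : s(⟨w, Set.mem_insert w S⟩, u') ∈ p.reverse.edges := by
        rw [hre, Walk.edges_cons]; exact List.mem_cons_self
      rw [Walk.edges_reverse, List.mem_reverse] at this
      exact this
    have hreach := reach_of_avoid r (fun z hz => by
        intro hzw
        have hz' : z = (⟨w, Set.mem_insert w S⟩ : ↥(insert w S)) := Subtype.ext hzw
        rw [hz'] at hz
        exact hwr hz) hvS huS
    exact ⟨u', v', huS, hvS, fun e => huv (Subtype.ext e), h, h2, hreach.symm⟩

lemma cycleConvex_iff_good : CycleConvex G S ↔ Good G S := by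
  constructor
  · intro hcc w hw u v hu hv hne hadj1 hadj2 hreach
    obtain ⟨c, hc⟩ := exists_cycle_of hw hu hv hne hadj1 hadj2 hreach
    exact hcc w hw c hc
  · intro hg w hw c hc
    obtain ⟨u, v, hu, hv, hne, hadj1, hadj2, hreach⟩ := neighbors_of_cycle hw c hc
    exact hg w hw u v hu hv hne hadj1 hadj2 hreach

lemma good_empty : Good G (∅ : Set V) := fun _ _ _ _ hu => absurd hu (by simp)

lemma cycleConvex_empty : CycleConvex G (∅ : Set V) :=
  cycleConvex_iff_good.mpr good_empty

end AuxA

section AuxB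
variable {α β : Type*} {G : SimpleGraph α} {H : SimpleGraph β}


/-- Projection of reachability in an induced subgraph of a box product whose vertex set is a
cylinder `S₀ ×ˢ univ`. -/
lemma reach_proj_fst {S₀ : Set α} {x y : ↥(S₀ ×ˢ (Set.univ : Set β))}
    (r : ((G □ H).induce (S₀ ×ˢ (Set.univ : Set β))).Walk x y) :
    (G.induce S₀).Reachable ⟨(x : α × β).1, x.2.1⟩ ⟨(y : α × β).1, y.2.1⟩ := by
  induction r with
  | nil => exact Reachable.refl _
  | @cons a z b h r ih =>
    rcases h with ⟨hG, _⟩ | ⟨_, hfst⟩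
    · have hadj : (G.induce S₀).Adj ⟨(a : α × β).1, a.2.1⟩ ⟨(z : α × β).1, z.2.1⟩ := hG
      exact hadj.reachable.trans ih
    · have : (⟨(a : α × β).1, a.2.1⟩ : ↥S₀) = ⟨(z : α × β).1, z.2.1⟩ := Subtype.ext hfst
      rw [this]
      exact ih

lemma reach_proj_snd {S₀ : Set β} {x y : ↥((Set.univ : Set α) ×ˢ S₀)}
    (r : ((G □ H).induce ((Set.univ : Set α) ×ˢ S₀)).Walk x y) :
    (H.induce S₀).Reachable ⟨(x : α × β).2, x.2.2⟩ ⟨(y : α × β).2, y.2.2⟩ := by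
  induction r with
  | nil => exact Reachable.refl _
  | @cons a z b h r ih =>
    rcases h with ⟨_, hsnd⟩ | ⟨hH, _⟩
    · have : (⟨(a : α × β).2, a.2.2⟩ : ↥S₀) = ⟨(z : α × β).2, z.2.2⟩ := Subtype.ext hsnd
      rw [this]
      exact ih
    · have hadj : (H.induce S₀).Adj ⟨(a : α × β).2, a.2.2⟩ ⟨(z : α × β).2, z.2.2⟩ := hH
      exact hadj.reachable.trans ih

lemma good_cylinder_fst {S₀ : Set α} (hS : Good G S₀) :
    Good (G □ H) (S₀ ×ˢ (Set.univ : Set β)) := by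
  intro w hw u v hu hv hne hadj1 hadj2 hreach
  have hw1 : w.1 ∉ S₀ := fun h => hw ⟨h, trivial⟩
  have h1 : G.Adj w.1 u.1 ∧ w.2 = u.2 := by
    rcases hadj1 with h | ⟨_, hfst⟩
    · exact h
    · exact absurd (hfst ▸ hu.1) hw1
  have h2 : G.Adj w.1 v.1 ∧ w.2 = v.2 := by
    rcases hadj2 with h | ⟨_, hfst⟩
    · exact h
    · exact absurd (hfst ▸ hv.1) hw1
  have hne1 : u.1 ≠ v.1 := by
    intro e
    exact hne (Prod.ext e (h1.2.symm.trans h2.2))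
  obtain ⟨r⟩ := hreach
  exact hS w.1 hw1 u.1 v.1 hu.1 hv.1 hne1 h1.1 h2.1 (reach_proj_fst r)

lemma good_cylinder_snd {S₀ : Set β} (hS : Good H S₀) :
    Good (G □ H) ((Set.univ : Set α) ×ˢ S₀) := by
  intro w hw u v hu hv hne hadj1 hadj2 hreach
  have hw2 : w.2 ∉ S₀ := fun h => hw ⟨trivial, h⟩
  have h1 : H.Adj w.2 u.2 ∧ w.1 = u.1 := by
    rcases hadj1 with ⟨_, hsnd⟩ | h
    · exact absurd (hsnd ▸ hu.2) hw2
    · exact h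
  have h2 : H.Adj w.2 v.2 ∧ w.1 = v.1 := by
    rcases hadj2 with ⟨_, hsnd⟩ | h
    · exact absurd (hsnd ▸ hv.2) hw2
    · exact h
  have hne2 : u.2 ≠ v.2 := by
    intro e
    exact hne (Prod.ext (h1.2.symm.trans h2.2) e)
  obtain ⟨r⟩ := hreach
  exact hS w.2 hw2 u.2 v.2 hu.2 hv.2 hne2 h1.1 h2.1 (reach_proj_snd r)

lemma good_fiber_fst {S : Set (α × β)} (hS : Good (G □ H) S) (b : β) :
    Good G {a | (a, b) ∈ S} := by
  intro a ha u v hu hv hne hau hav hre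
  have lift : ((G □ H).induce S).Reachable ⟨(u, b), hu⟩ ⟨(v, b), hv⟩ := by
    let f : G.induce {a | (a, b) ∈ S} →g (G □ H).induce S :=
      ⟨fun x => ⟨(x.1, b), x.2⟩, fun h => Or.inl ⟨h, rfl⟩⟩
    exact hre.map f
  exact hS (a, b) ha (u, b) (v, b) hu hv (fun e => hne (congrArg Prod.fst e))
    (Or.inl ⟨hau, rfl⟩) (Or.inl ⟨hav, rfl⟩) lift

lemma good_fiber_snd {S : Set (α × β)} (hS : Good (G □ H) S) (a : α) :
    Good H {b | (a, b) ∈ S} := by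
  intro b hb u v hu hv hne hbu hbv hre
  have lift : ((G □ H).induce S).Reachable ⟨(a, u), hu⟩ ⟨(a, v), hv⟩ := by
    let f : H.induce {b | (a, b) ∈ S} →g (G □ H).induce S :=
      ⟨fun x => ⟨(a, x.1), x.2⟩, fun h => Or.inr ⟨h, rfl⟩⟩
    exact hre.map f
  exact hS (a, b) hb (a, u) (a, v) hu hv (fun e => hne (congrArg Prod.snd e))
    (Or.inr ⟨hbu, rfl⟩) (Or.inr ⟨hbv, rfl⟩) lift


end AuxB

section AuxC
variable {α β : Type*} [Fintype α] [Fintype β] {G : SimpleGraph α} {H : SimpleGraph β}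


lemma ncard_eq_sum_fibers_snd (S : Set (α × β)) :
    S.ncard = ∑ b : β, {a | (a, b) ∈ S}.ncard := by
  classical
  rw [Set.ncard_eq_toFinset_card' S]
  rw [Finset.card_eq_sum_card_fiberwise (f := Prod.snd) (t := Finset.univ)
    (fun x _ => Finset.mem_univ _)]
  refine Finset.sum_congr rfl fun b _ => ?_
  rw [Set.ncard_eq_toFinset_card' {a | (a, b) ∈ S}]
  apply Finset.card_bij (fun (p : α × β) _ => p.1)
  · intro p hp
    simp only [Finset.mem_filter, Set.mem_toFinset] at hp
    simp only [Set.mem_toFinset, Set.mem_setOf_eq]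
    rw [show ((p.1 : α), b) = p from Prod.ext rfl hp.2.symm]
    exact hp.1
  · intro p hp q hq e
    simp only [Finset.mem_filter, Set.mem_toFinset] at hp hq
    exact Prod.ext e (hp.2.trans hq.2.symm)
  · intro a ha
    simp only [Set.mem_toFinset, Set.mem_setOf_eq] at ha
    exact ⟨(a, b), by simp [Finset.mem_filter, Set.mem_toFinset, ha], rfl⟩

lemma ncard_eq_sum_fibers_fst (S : Set (α × β)) :
    S.ncard = ∑ a : α, {b | (a, b) ∈ S}.ncard := by
  classical
  rw [Set.ncard_eq_toFinset_card' S]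
  rw [Finset.card_eq_sum_card_fiberwise (f := Prod.fst) (t := Finset.univ)
    (fun x _ => Finset.mem_univ _)]
  refine Finset.sum_congr rfl fun a _ => ?_
  rw [Set.ncard_eq_toFinset_card' {b | (a, b) ∈ S}]
  apply Finset.card_bij (fun (p : α × β) _ => p.2)
  · intro p hp
    simp only [Finset.mem_filter, Set.mem_toFinset] at hp
    simp only [Set.mem_toFinset, Set.mem_setOf_eq]
    rw [show (a, (p.2 : β)) = p from Prod.ext hp.2.symm rfl]
    exact hp.1
  · intro p hp q hq e
    simp only [Finset.mem_filter, Set.mem_toFinset] at hp hq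
    exact Prod.ext (hp.2.trans hq.2.symm) e
  · intro b hb
    simp only [Set.mem_toFinset, Set.mem_setOf_eq] at hb
    exact ⟨(a, b), by simp [Finset.mem_filter, Set.mem_toFinset, hb], rfl⟩

lemma ncard_cylinder_fst (S₀ : Set α) :
    (S₀ ×ˢ (Set.univ : Set β)).ncard = S₀.ncard * Fintype.card β := by
  classical
  rw [show (S₀ ×ˢ (Set.univ : Set β)).ncard = Nat.card ↥(S₀ ×ˢ (Set.univ : Set β)) from rfl]
  rw [Nat.card_congr (Equiv.Set.prod S₀ Set.univ)]
  rw [Nat.card_prod]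
  congr 1
  rw [show Nat.card ↥(Set.univ : Set β) = (Set.univ : Set β).ncard from rfl, Set.ncard_univ,
    Nat.card_eq_fintype_card]

lemma ncard_cylinder_snd (S₀ : Set β) :
    ((Set.univ : Set α) ×ˢ S₀).ncard = S₀.ncard * Fintype.card α := by
  classical
  rw [show ((Set.univ : Set α) ×ˢ S₀).ncard = Nat.card ↥((Set.univ : Set α) ×ˢ S₀) from rfl]
  rw [Nat.card_congr (Equiv.Set.prod Set.univ S₀)]
  rw [Nat.card_prod]
  rw [show Nat.card ↥(Set.univ : Set α) = (Set.univ : Set α).ncard from rfl, Set.ncard_univ,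
    Nat.card_eq_fintype_card, Nat.mul_comm]
  rfl



lemma exists_adj_dist_lt {G : SimpleGraph α} (hG : G.Connected) {a a₀ : α} (h : a ≠ a₀) :
    ∃ a', G.Adj a a' ∧ G.dist a' a₀ < G.dist a a₀ := by
  obtain ⟨p, hp⟩ := (hG.preconnected a a₀).exists_walk_length_eq_dist
  cases p with
  | nil => exact absurd rfl h
  | @cons _ a' _ hadj q =>
    refine ⟨a', hadj, ?_⟩
    have h1 : G.dist a' a₀ ≤ q.length := SimpleGraph.dist_le q
    rw [Walk.length_cons] at hp
    omega

lemma not_both_full (hG : G.Connected) (hH : H.Connected) {S : Set (α × β)}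
    (hS : Good (G □ H) S) (hprop : S ≠ Set.univ) (a₀ : α) (b₀ : β)
    (hrow : ∀ b, (a₀, b) ∈ S) (hcol : ∀ a, (a, b₀) ∈ S) : False := by
  classical
  have hne : ∃ w, w ∉ S := by
    by_contra hcon
    push_neg at hcon
    exact hprop (Set.eq_univ_of_forall hcon)
  obtain ⟨w0, hw0⟩ := hne
  set f : α × β → ℕ := fun p => G.dist p.1 a₀ + H.dist p.2 b₀ with hf
  obtain ⟨p, hpmem, hmin⟩ := Finset.exists_min_image
    (Finset.univ.filter (fun p : α × β => p ∉ S)) f ⟨w0, by simp [hw0]⟩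
  rw [Finset.mem_filter] at hpmem
  have hpS : p ∉ S := hpmem.2
  have hmin' : ∀ x : α × β, f x < f p → x ∈ S := by
    intro x hx
    by_contra hxS
    have := hmin x (by simp [hxS])
    omega
  have ha : p.1 ≠ a₀ := fun e => hpS (by rw [← Prod.mk.eta (p := p), e]; exact hrow p.2)
  have hb : p.2 ≠ b₀ := fun e => hpS (by rw [← Prod.mk.eta (p := p), e]; exact hcol p.1)
  obtain ⟨a', haa', hda⟩ := exists_adj_dist_lt hG ha
  obtain ⟨b', hbb', hdb⟩ := exists_adj_dist_lt hH hb
  have h1 : (a', p.2) ∈ S := hmin' _ (by simp only [hf]; omega)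
  have h2 : (p.1, b') ∈ S := hmin' _ (by simp only [hf]; omega)
  have h3 : (a', b') ∈ S := hmin' _ (by simp only [hf]; omega)
  have hreach : ((G □ H).induce S).Reachable ⟨(a', p.2), h1⟩ ⟨(p.1, b'), h2⟩ := by
    have e1 : ((G □ H).induce S).Adj ⟨(a', p.2), h1⟩ ⟨(a', b'), h3⟩ := Or.inr ⟨hbb', rfl⟩
    have e2 : ((G □ H).induce S).Adj ⟨(a', b'), h3⟩ ⟨(p.1, b'), h2⟩ := Or.inl ⟨haa'.symm, rfl⟩
    exact e1.reachable.trans e2.reachable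
  exact hS p hpS (a', p.2) (p.1, b') h1 h2
    (fun e => haa'.ne' (show a' = p.1 from congrArg Prod.fst e))
    (by exact Or.inl ⟨haa', rfl⟩) (by exact Or.inr ⟨hbb', rfl⟩) hreach


end AuxC


section MainAux
variable {V : Type*} [Fintype V] (G : SimpleGraph V)

lemma bddAbove_ccSet :
    BddAbove {n : ℕ | ∃ S : Set V, S.ncard = n ∧ CycleConvex G S ∧ S ≠ Set.univ} := by
  refine ⟨Fintype.card V, ?_⟩
  rintro k ⟨S, rfl, -, -⟩
  calc S.ncard ≤ (Set.univ : Set V).ncard :=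
        Set.ncard_le_ncard (Set.subset_univ S) Set.finite_univ
    _ = Fintype.card V := by rw [Set.ncard_univ, Nat.card_eq_fintype_card]

lemma nonempty_ccSet [Nonempty V] :
    Set.Nonempty {n : ℕ | ∃ S : Set V, S.ncard = n ∧ CycleConvex G S ∧ S ≠ Set.univ} :=
  ⟨0, ∅, Set.ncard_empty V, cycleConvex_empty, Set.empty_ne_univ⟩

lemma ccNumber_mem [Nonempty V] :
    cycleConvexityNumber G ∈
      {n : ℕ | ∃ S : Set V, S.ncard = n ∧ CycleConvex G S ∧ S ≠ Set.univ} :=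
  Nat.sSup_mem (nonempty_ccSet G) (bddAbove_ccSet G)

end MainAux

theorem stmt_13 [Fintype α] [Fintype β] (G : SimpleGraph α) (H : SimpleGraph β)
    [Nontrivial α] [Nontrivial β] (hG : G.Connected) (hH : H.Connected)
    (m n : ℕ) (hm : Fintype.card α = m) (hn : Fintype.card β = n) :
    cycleConvexityNumber (G □ H) =
      max (n * cycleConvexityNumber G) (m * cycleConvexityNumber H) := by
  classical
  subst hm hn
  have hNα : Nonempty α := inferInstance
  have hNβ : Nonempty β := inferInstance
  apply le_antisymm
  · -- upper bound
    apply csSup_le (nonempty_ccSet (G □ H))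
    rintro k ⟨S, rfl, hcc, hprop⟩
    have hgood : Good (G □ H) S := cycleConvex_iff_good.mp hcc
    by_cases h1 : ∀ b : β, {a | (a, b) ∈ S} ≠ Set.univ
    · refine le_trans ?_ (le_max_left _ _)
      calc S.ncard = ∑ b : β, {a | (a, b) ∈ S}.ncard := ncard_eq_sum_fibers_snd S
        _ ≤ ∑ _b : β, cycleConvexityNumber G := by
            refine Finset.sum_le_sum fun b _ => ?_
            exact le_csSup (bddAbove_ccSet G)
              ⟨{a | (a, b) ∈ S}, rfl,
                cycleConvex_iff_good.mpr (good_fiber_fst hgood b), h1 b⟩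
        _ = Fintype.card β * cycleConvexityNumber G := by
            rw [Finset.sum_const, Finset.card_univ, smul_eq_mul]
    · push_neg at h1
      obtain ⟨b₀, hb₀⟩ := h1
      by_cases h2 : ∀ a : α, {b | (a, b) ∈ S} ≠ Set.univ
      · refine le_trans ?_ (le_max_right _ _)
        calc S.ncard = ∑ a : α, {b | (a, b) ∈ S}.ncard := ncard_eq_sum_fibers_fst S
          _ ≤ ∑ _a : α, cycleConvexityNumber H := by
              refine Finset.sum_le_sum fun a _ => ?_
              exact le_csSup (bddAbove_ccSet H)
                ⟨{b | (a, b) ∈ S}, rfl,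
                  cycleConvex_iff_good.mpr (good_fiber_snd hgood a), h2 a⟩
          _ = Fintype.card α * cycleConvexityNumber H := by
              rw [Finset.sum_const, Finset.card_univ, smul_eq_mul]
      · push_neg at h2
        obtain ⟨a₀, ha₀⟩ := h2
        exact absurd (not_both_full hG hH hgood hprop a₀ b₀
          (fun b => Set.eq_univ_iff_forall.mp ha₀ b)
          (fun a => Set.eq_univ_iff_forall.mp hb₀ a)) not_false
  · apply max_le
    · -- n * C_cc(G) ≤ C_cc(G □ H)
      obtain ⟨S₀, hcard, hcc, hprop⟩ := ccNumber_mem G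
      apply le_csSup (bddAbove_ccSet (G □ H))
      refine ⟨S₀ ×ˢ (Set.univ : Set β), ?_, ?_, ?_⟩
      · rw [ncard_cylinder_fst, hcard, Nat.mul_comm]
      · exact cycleConvex_iff_good.mpr (good_cylinder_fst (cycleConvex_iff_good.mp hcc))
      · intro e
        apply hprop
        apply Set.eq_univ_iff_forall.mpr
        intro a
        have : (a, Classical.arbitrary β) ∈ S₀ ×ˢ (Set.univ : Set β) :=
          e ▸ Set.mem_univ _
        exact this.1
    · obtain ⟨S₀, hcard, hcc, hprop⟩ := ccNumber_mem H
      apply le_csSup (bddAbove_ccSet (G □ H))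
      refine ⟨(Set.univ : Set α) ×ˢ S₀, ?_, ?_, ?_⟩
      · rw [ncard_cylinder_snd, hcard, Nat.mul_comm]
      · exact cycleConvex_iff_good.mpr (good_cylinder_snd (cycleConvex_iff_good.mp hcc))
      · intro e
        apply hprop
        apply Set.eq_univ_iff_forall.mpr
        intro b
        have : (Classical.arbitrary α, b) ∈ (Set.univ : Set α) ×ˢ S₀ :=
          e ▸ Set.mem_univ _
        exact this.2
end

section
/- Let G and H be nontrivial connected graphs. Then the cycle convexity number of the lexicographic product G ∘ H equals the independence number of G ∘ H: C_cc(G ∘ H) = α(G ∘ H). -/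
open SimpleGraph

variable {V α β : Type*}

/-!
Independent sets are cycle convex in any graph: a cycle through a new vertex `w` has two
consecutive vertices other than `w`, which would be adjacent vertices of the set.

Conversely, a cycle convex set contains every common neighbour of two adjacent vertices in it, and
`G ∘ H` is full of triangles: an edge inside a fibre `{g} × V(H)` forms one with every vertex of a
neighbouring fibre, and a `G`-edge `(g₁, h₁) ~ (g₂, h₂)` with every `H`-neighbour of `(g₁, h₁)`.
By connectivity of `H` an edge inside the set therefore puts a whole fibre into it, and by
connectivity of `G` this fibre spreads to all of `G ∘ H`. So the proper cycle convex sets of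
`G ∘ H` are exactly its independent sets.
-/

namespace SimpleGraph.Walk

variable {G : SimpleGraph V}

theorem isCycle_triangle {u v w : V} (huv : G.Adj u v) (hvw : G.Adj v w) (hwu : G.Adj w u) :
    (cons huv (cons hvw (cons hwu nil))).IsCycle := by
  simp [cons_isCycle_iff, huv.ne, hvw.ne, hwu.ne, huv.ne.symm, hwu.ne.symm]

end SimpleGraph.Walk

section CycleConvex

variable {G : SimpleGraph V} {S : Set V}

theorem CycleConvex.mem_of_adj_of_adj (hS : CycleConvex G S) {x y w : V} (hx : x ∈ S)
    (hy : y ∈ S) (hxy : G.Adj x y) (hyw : G.Adj y w) (hwx : G.Adj w x) : w ∈ S := by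
  by_contra hw
  exact hS w hw _ (Walk.isCycle_triangle (G := G.induce (insert w S))
    (u := ⟨w, Set.mem_insert w S⟩) (v := ⟨x, Set.mem_insert_of_mem w hx⟩)
    (w := ⟨y, Set.mem_insert_of_mem w hy⟩) hwx hxy hyw)

theorem SimpleGraph.IsIndepSet.cycleConvex (hS : G.IsIndepSet S) : CycleConvex G S := by
  intro w hw c hc
  have hlen := hc.three_le_length
  have hmem : ∀ i, 1 ≤ i → i < c.length → (c.getVert i).1 ∈ S := fun i hi₁ hi₂ =>
    (c.getVert i).2.resolve_left fun h => by
      have := (hc.getVert_endpoint_iff hi₂.le).1 (Subtype.ext h)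
      omega
  have hadj := c.adj_getVert_succ (i := 1) (by omega)
  exact hS (hmem 1 le_rfl (by omega)) (hmem 2 (by omega) (by omega))
    (fun h => hadj.ne (Subtype.ext h)) hadj

end CycleConvex

namespace CycleConvex

variable {G : SimpleGraph α} {H : SimpleGraph β} {S : Set (α × β)}

theorem mk_mem_of_reachable (hS : CycleConvex (lexProd G H) S) {g₁ g₂ : α} {h₂ : β}
    (hg : G.Adj g₁ g₂) (h₂S : (g₂, h₂) ∈ S) {a b : β} (hab : H.Reachable a b)
    (haS : (g₁, a) ∈ S) : (g₁, b) ∈ S := by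
  obtain ⟨p⟩ := hab
  induction p with
  | nil => exact haS
  | cons hadj _ ih =>
    exact ih <| hS.mem_of_adj_of_adj haS h₂S (Or.inl hg) (Or.inl hg.symm)
      (Or.inr ⟨rfl, hadj.symm⟩)

theorem forall_mk_mem_of_reachable (hS : CycleConvex (lexProd G H) S) {e₁ e₂ : β}
    (he : H.Adj e₁ e₂) {a b : α} (hab : G.Reachable a b) (haS : ∀ h, (a, h) ∈ S) :
    ∀ h, (b, h) ∈ S := by
  obtain ⟨p⟩ := hab
  induction p with
  | nil => exact haS
  | cons hadj _ ih =>
    exact ih fun h => hS.mem_of_adj_of_adj (haS e₁) (haS e₂) (Or.inr ⟨rfl, he⟩) (Or.inl hadj)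
      (Or.inl hadj.symm)

theorem eq_univ_of_adj [Nontrivial α] [Nontrivial β] (hG : G.Preconnected)
    (hH : H.Preconnected) (hS : CycleConvex (lexProd G H) S) {x y : α × β} (hxS : x ∈ S)
    (hyS : y ∈ S) (hxy : (lexProd G H).Adj x y) : S = Set.univ := by
  obtain ⟨e₁, e₂, he⟩ : ∃ e₁ e₂, H.Adj e₁ e₂ :=
    ⟨_, hH.exists_adj_of_nontrivial (Classical.arbitrary β)⟩
  obtain ⟨g, hgS⟩ : ∃ g, ∀ h, (g, h) ∈ S := by
    rcases hxy with hGxy | ⟨hxy₁, hHxy⟩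
    · exact ⟨x.1, fun h => hS.mk_mem_of_reachable hGxy hyS (hH x.2 h) hxS⟩
    · obtain ⟨g, hg⟩ := hG.exists_adj_of_nontrivial x.1
      refine ⟨g, fun h => hS.mem_of_adj_of_adj hxS hyS (Or.inr ⟨hxy₁, hHxy⟩) ?_
        (Or.inl hg.symm)⟩
      exact Or.inl (hxy₁ ▸ hg)
  exact Set.eq_univ_of_forall fun z => hS.forall_mk_mem_of_reachable he (hG g z.1) hgS z.2

end CycleConvex

theorem cycleConvex_lexProd_and_ne_univ_iff_isIndepSet [Nontrivial α] [Nontrivial β]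
    {G : SimpleGraph α} {H : SimpleGraph β} (hG : G.Preconnected) (hH : H.Preconnected)
    (S : Set (α × β)) :
    CycleConvex (lexProd G H) S ∧ S ≠ Set.univ ↔ (lexProd G H).IsIndepSet S := by
  refine ⟨fun ⟨hS, hne⟩ x hx y hy _ hxy => hne (hS.eq_univ_of_adj hG hH hx hy hxy),
    fun hS => ⟨hS.cycleConvex, ?_⟩⟩
  rintro rfl
  obtain ⟨g, hg⟩ := hG.exists_adj_of_nontrivial (Classical.arbitrary α)
  let h := Classical.arbitrary β
  exact hS (Set.mem_univ (_, h)) (Set.mem_univ (g, h)) (by simpa using hg.ne) (Or.inl hg)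

theorem stmt_15_general (G : SimpleGraph α) (H : SimpleGraph β)
    [Nontrivial α] [Nontrivial β] (hG : G.Connected) (hH : H.Connected) :
    cycleConvexityNumber (lexProd G H) = indepNumber (lexProd G H) := by
  unfold cycleConvexityNumber indepNumber
  simp_rw [cycleConvex_lexProd_and_ne_univ_iff_isIndepSet hG.preconnected hH.preconnected]

theorem stmt_15 [Fintype α] [Fintype β] (G : SimpleGraph α) (H : SimpleGraph β)
    [Nontrivial α] [Nontrivial β] (hG : G.Connected) (hH : H.Connected) :
    cycleConvexityNumber (lexProd G H) = indepNumber (lexProd G H) :=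
  stmt_15_general G H hG hH
end

section
/- For integers m, n ≥ 3, the cycle convexity number of the Cartesian product of cycles satisfies C_cc(C_m □ C_n) = max{mn − 2n, mn − 2m}. -/
open SimpleGraph

variable {V α β : Type*}

open Fin.NatCast Fin.CommRing

lemma no_cycle_of_unique_nbr {V' : Type*} {G' : SimpleGraph V'} {w u : V'}
    (h : ∀ x, G'.Adj w x → x = u) (c : G'.Walk w w) : ¬ c.IsCycle := by
  intro hc
  have h3 := hc.three_le_length
  cases c with
  | nil => simp at h3
  | @cons _ x _ hadj p =>
    have hx : x = u := h _ hadj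
    have hplen : 2 ≤ p.length := by
      have : (SimpleGraph.Walk.cons hadj p).length = p.length + 1 := by simp
      omega
    have hpne : p.darts ≠ [] := by
      intro h0
      have := p.length_darts
      rw [h0] at this
      simp at this
      omega
    set d := p.darts.getLast hpne with hd
    have hd2 : d.snd = w := by rw [hd, SimpleGraph.Walk.getLast_darts_eq_lastDart]; rfl
    have hdf : d.fst = u := by
      apply h
      have := d.adj
      rw [hd2] at this
      exact this.symm
    have hmem : d.edge ∈ p.edges := List.mem_map_of_mem (List.getLast_mem hpne)
    have hedge : d.edge = s(w, u) := by
      have hprod : d.toProd = (u, w) := Prod.ext hdf hd2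
      rw [SimpleGraph.Dart.edge, hprod]
      exact Sym2.eq_swap
    have htrail := hc.isTrail.edges_nodup
    rw [SimpleGraph.Walk.edges_cons] at htrail
    rw [hedge, ← hx] at hmem
    exact (List.nodup_cons.mp htrail).1 hmem

lemma cycleConvex_not_reach {V' : Type*} {G' : SimpleGraph V'} {S : Set V'}
    (hS : CycleConvex G' S) {w u v : V'} (hw : w ∉ S) (hu : u ∈ S) (hv : v ∈ S)
    (huv : u ≠ v) (hwu : G'.Adj w u) (hwv : G'.Adj w v)
    (hr : (G'.induce S).Reachable ⟨u, hu⟩ ⟨v, hv⟩) : False := by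
  classical
  obtain ⟨p0⟩ := hr
  have hsub : S ≤ insert w S := Set.subset_insert w S
  set f : G'.induce S ↪g G'.induce (insert w S) := G'.induceHomOfLE hsub with hf
  have hp0 : (p0.toPath : (G'.induce S).Walk ⟨u, hu⟩ ⟨v, hv⟩).IsPath := p0.toPath.2
  set p1 : (G'.induce (insert w S)).Walk ⟨u, hsub hu⟩ ⟨v, hsub hv⟩ :=
    SimpleGraph.Walk.map f.toHom (p0.toPath : (G'.induce S).Walk ⟨u, hu⟩ ⟨v, hv⟩) with hp1def
  have hp1 : p1.IsPath := SimpleGraph.Walk.map_isPath_of_injective f.injective hp0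
  have hwnot : ∀ (hww : w ∈ insert w S), (⟨w, hww⟩ : ↥(insert w S)) ∉ p1.support := by
    intro hww hmem
    simp only [hp1def, SimpleGraph.Walk.support_map] at hmem
    have hmem' : (⟨w, hww⟩ : ↥(insert w S)) ∈ (p0.toPath : (G'.induce S).Walk ⟨u, hu⟩ ⟨v, hv⟩).support.map f.toHom := by
      rw [← SimpleGraph.Walk.support_map]; exact hmem
    obtain ⟨x, _, hx2⟩ := List.mem_map.mp hmem'
    have : w ∈ S := by
      have : (x : V') = w := congrArg Subtype.val hx2
      rw [← this]; exact x.2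
    exact hw this
  have hadjwu : (G'.induce (insert w S)).Adj ⟨w, Set.mem_insert w S⟩ ⟨u, hsub hu⟩ := by
    simp only [SimpleGraph.comap_adj, Function.Embedding.coe_subtype]
    exact hwu
  have hadjvw : (G'.induce (insert w S)).Adj ⟨v, hsub hv⟩ ⟨w, Set.mem_insert w S⟩ := by
    simp only [SimpleGraph.comap_adj, Function.Embedding.coe_subtype]
    exact hwv.symm
  have hqpath : (SimpleGraph.Walk.cons hadjwu p1).IsPath := by
    rw [SimpleGraph.Walk.cons_isPath_iff]
    exact ⟨hp1, hwnot _⟩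
  have hcyc : (SimpleGraph.Walk.cons hadjvw (SimpleGraph.Walk.cons hadjwu p1)).IsCycle := by
    apply SimpleGraph.Path.cons_isCycle ⟨_, hqpath⟩
    show s(_, _) ∉ (SimpleGraph.Walk.cons hadjwu p1).edges
    intro hmemedge
    rw [SimpleGraph.Walk.edges_cons] at hmemedge
    rcases List.mem_cons.mp hmemedge with h1 | h1
    · rw [Sym2.eq_iff] at h1
      rcases h1 with ⟨h2, _⟩ | ⟨h2, _⟩
      · have : v = w := congrArg Subtype.val h2
        rw [this] at hv; exact hw hv
      · exact huv (congrArg Subtype.val h2).symm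
    · exact hwnot _ (SimpleGraph.Walk.snd_mem_support_of_mem_edges p1 h1)
  have hwsup : (⟨w, Set.mem_insert w S⟩ : ↥(insert w S)) ∈
      (SimpleGraph.Walk.cons hadjvw (SimpleGraph.Walk.cons hadjwu p1)).support := by
    rw [SimpleGraph.Walk.support_cons, SimpleGraph.Walk.support_cons]
    simp
  exact hS w hw _ (hcyc.rotate hwsup)

lemma reach_chain {V' : Type*} {G' : SimpleGraph V'} {S : Set V'} (f : ℕ → V')
    (k : ℕ) (hmem : ∀ t, t ≤ k → f t ∈ S) (hadj : ∀ t, t < k → G'.Adj (f t) (f (t+1))) :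
    (G'.induce S).Reachable ⟨f 0, hmem 0 (Nat.zero_le k)⟩ ⟨f k, hmem k le_rfl⟩ := by
  induction k with
  | zero => exact SimpleGraph.Reachable.refl _
  | succ k ih =>
    have h1 := ih (fun t ht => hmem t (Nat.le_succ_of_le ht)) (fun t ht => hadj t (Nat.lt_succ_of_lt ht))
    refine h1.trans (SimpleGraph.Adj.reachable ?_)
    simp only [SimpleGraph.comap_adj, Function.Embedding.coe_subtype]
    exact hadj k (Nat.lt_succ_self k)

section Helpers
variable {k : ℕ}

lemma cyc_succ (x : Fin (k+3)) : (cycleGraph (k+3)).Adj x (x+1) := by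
  exact cycleGraph_adj.mpr (Or.inr (by ring))

lemma cyc_pred (x : Fin (k+3)) : (cycleGraph (k+3)).Adj x (x-1) := by
  exact cycleGraph_adj.mpr (Or.inl (by ring))

lemma fin3_one_ne_zero : (1 : Fin (k+3)) ≠ 0 := by
  intro h
  have := congrArg Fin.val h
  simp [Fin.val_one] at this

lemma fin3_two_ne_zero : (1 + 1 : Fin (k+3)) ≠ 0 := by
  intro h
  have := congrArg Fin.val h
  rw [Fin.val_add] at this
  simp [Fin.val_one, Nat.mod_eq_of_lt] at this

lemma fin3_add_one_ne (x : Fin (k+3)) : x + 1 ≠ x := by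
  intro h
  exact fin3_one_ne_zero (by linear_combination h)

lemma fin3_sub_one_ne (x : Fin (k+3)) : x - 1 ≠ x := by
  intro h
  exact fin3_one_ne_zero (by linear_combination -h)

lemma fin3_add_ne_sub (x : Fin (k+3)) : x + 1 ≠ x - 1 := by
  intro h
  exact fin3_two_ne_zero (by linear_combination h)

lemma fin3_cast_val (t : ℕ) : ((t : Fin (k+3)) : ℕ) = t % (k+3) := by
  simp [Fin.val_natCast]

lemma fin3_natCast_self : ((k+3 : ℕ) : Fin (k+3)) = 0 := by
  apply Fin.ext
  rw [fin3_cast_val]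
  simp

lemma fin3_valP (D : Fin (k+3)) (t : ℕ) : ((D + (t : Fin (k+3))) : Fin (k+3)).val = (D.val + t) % (k+3) := by
  rw [Fin.val_add, fin3_cast_val]
  conv_rhs => rw [Nat.add_mod]
  conv_lhs => rw [Nat.add_mod]
  rw [Nat.mod_mod_of_dvd _ dvd_rfl]


lemma fin3_valN (t : ℕ) : ((0 : Fin (k+3)) - (t : Fin (k+3))).val = (k+3 - t % (k+3)) % (k+3) := by
  rw [Fin.sub_def]
  simp [fin3_cast_val]

end Helpers

section Torus
variable {a b : ℕ}

abbrev GG (a b : ℕ) : SimpleGraph (Fin (a+3) × Fin (b+3)) := cycleGraph (a+3) □ cycleGraph (b+3)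

lemma row_single {S : Set (Fin (a+3) × Fin (b+3))} (hS : CycleConvex (GG a b) S)
    {w : Fin (a+3) × Fin (b+3)} (hw : w ∉ S)
    (hone : ∀ z, z ∉ S → z.1 = w.1 → z = w) : False := by
  set u : Fin (a+3) × Fin (b+3) := (w.1, w.2 - 1) with hu
  set v : Fin (a+3) × Fin (b+3) := (w.1, w.2 + 1) with hv
  have huS : u ∈ S := by
    by_contra h
    exact fin3_sub_one_ne w.2 (congrArg Prod.snd (hone u h rfl))
  have hvS : v ∈ S := by
    by_contra h
    exact fin3_add_one_ne w.2 (congrArg Prod.snd (hone v h rfl))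
  have hvu : v ≠ u := by
    intro h
    exact fin3_add_ne_sub w.2 (congrArg Prod.snd h)
  have hwv : (GG a b).Adj w v := boxProd_adj.mpr (Or.inr ⟨cyc_succ w.2, rfl⟩)
  have hwu : (GG a b).Adj w u := boxProd_adj.mpr (Or.inr ⟨cyc_pred w.2, rfl⟩)
  set f : ℕ → Fin (a+3) × Fin (b+3) := fun t => (w.1, w.2 + 1 + (t : Fin (b+3))) with hf
  have hmem : ∀ t, t ≤ b+1 → f t ∈ S := by
    intro t ht
    by_contra h
    have heq := congrArg Prod.snd (hone (f t) h rfl)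
    simp only [hf] at heq
    have h2 : ((1 + t : ℕ) : Fin (b+3)) = 0 := by
      push_cast
      linear_combination heq
    have := congrArg Fin.val h2
    rw [fin3_cast_val, Nat.mod_eq_of_lt (by omega)] at this
    simp at this
  have hadj : ∀ t, t < b+1 → (GG a b).Adj (f t) (f (t+1)) := by
    intro t _
    refine boxProd_adj.mpr (Or.inr ⟨?_, rfl⟩)
    simp only [hf]
    have : ((t+1 : ℕ) : Fin (b+3)) = (t : Fin (b+3)) + 1 := by push_cast; ring
    rw [this, ← add_assoc]
    exact cyc_succ _
  have reach := reach_chain (G' := GG a b) (S := S) f (b+1) hmem hadj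
  have e0 : f 0 = v := by
    simp only [hf, hv, Nat.cast_zero, add_zero]
  have ek : f (b+1) = u := by
    simp only [hf, hu]
    have hb3' : ((b : ℕ) : Fin (b+3)) + 3 = 0 := by
      have := fin3_natCast_self (k := b)
      push_cast at this
      linear_combination this
    refine Prod.ext rfl ?_
    show w.2 + 1 + ((b+1 : ℕ) : Fin (b+3)) = w.2 - 1
    push_cast
    linear_combination hb3'
  rw [show (⟨f 0, hmem 0 (Nat.zero_le _)⟩ : ↥S) = ⟨v, hvS⟩ from Subtype.ext e0,
     show (⟨f (b+1), hmem (b+1) le_rfl⟩ : ↥S) = ⟨u, huS⟩ from Subtype.ext ek] at reach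
  exact cycleConvex_not_reach hS hw hvS huS hvu hwv hwu reach

lemma col_single {S : Set (Fin (a+3) × Fin (b+3))} (hS : CycleConvex (GG a b) S)
    {w : Fin (a+3) × Fin (b+3)} (hw : w ∉ S)
    (hone : ∀ z, z ∉ S → z.2 = w.2 → z = w) : False := by
  set u : Fin (a+3) × Fin (b+3) := (w.1 - 1, w.2) with hu
  set v : Fin (a+3) × Fin (b+3) := (w.1 + 1, w.2) with hv
  have huS : u ∈ S := by
    by_contra h
    exact fin3_sub_one_ne w.1 (congrArg Prod.fst (hone u h rfl))
  have hvS : v ∈ S := by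
    by_contra h
    exact fin3_add_one_ne w.1 (congrArg Prod.fst (hone v h rfl))
  have hvu : v ≠ u := by
    intro h
    exact fin3_add_ne_sub w.1 (congrArg Prod.fst h)
  have hwv : (GG a b).Adj w v := boxProd_adj.mpr (Or.inl ⟨cyc_succ w.1, rfl⟩)
  have hwu : (GG a b).Adj w u := boxProd_adj.mpr (Or.inl ⟨cyc_pred w.1, rfl⟩)
  set f : ℕ → Fin (a+3) × Fin (b+3) := fun t => (w.1 + 1 + (t : Fin (a+3)), w.2) with hf
  have hmem : ∀ t, t ≤ a+1 → f t ∈ S := by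
    intro t ht
    by_contra h
    have heq := congrArg Prod.fst (hone (f t) h rfl)
    simp only [hf] at heq
    have h2 : ((1 + t : ℕ) : Fin (a+3)) = 0 := by
      push_cast
      linear_combination heq
    have := congrArg Fin.val h2
    rw [fin3_cast_val, Nat.mod_eq_of_lt (by omega)] at this
    simp at this
  have hadj : ∀ t, t < a+1 → (GG a b).Adj (f t) (f (t+1)) := by
    intro t _
    refine boxProd_adj.mpr (Or.inl ⟨?_, rfl⟩)
    simp only [hf]
    have : ((t+1 : ℕ) : Fin (a+3)) = (t : Fin (a+3)) + 1 := by push_cast; ring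
    rw [this, ← add_assoc]
    exact cyc_succ _
  have reach := reach_chain (G' := GG a b) (S := S) f (a+1) hmem hadj
  have e0 : f 0 = v := by
    simp only [hf, hv, Nat.cast_zero, add_zero]
  have ek : f (a+1) = u := by
    simp only [hf, hu]
    have hb3' : ((a : ℕ) : Fin (a+3)) + 3 = 0 := by
      have := fin3_natCast_self (k := a)
      push_cast at this
      linear_combination this
    refine Prod.ext ?_ rfl
    show w.1 + 1 + ((a+1 : ℕ) : Fin (a+3)) = w.1 - 1
    push_cast
    linear_combination hb3'
  rw [show (⟨f 0, hmem 0 (Nat.zero_le _)⟩ : ↥S) = ⟨v, hvS⟩ from Subtype.ext e0,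
     show (⟨f (a+1), hmem (a+1) le_rfl⟩ : ↥S) = ⟨u, huS⟩ from Subtype.ext ek] at reach
  exact cycleConvex_not_reach hS hw hvS huS hvu hwv hwu reach


lemma eq_N_of_mod {N s : ℕ} (h : s % N = 0) (h1 : 1 ≤ s) (h2 : s < 2*N) : s = N := by
  obtain ⟨c, hc⟩ := Nat.dvd_of_mod_eq_zero h
  have hc1 : c = 1 := by
    by_contra hcc
    rcases Nat.lt_or_ge c 1 with h3 | h3
    · have : c = 0 := by omega
      rw [this, Nat.mul_zero] at hc
      omega
    · have h3' : 2 ≤ c := by omega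
      have h4 : N*2 ≤ N*c := Nat.mul_le_mul_left N h3'
      have h5 : s = N*c := hc
      linarith
  rw [hc1, Nat.mul_one] at hc
  exact hc

lemma cross_lemma {S : Set (Fin (a+3) × Fin (b+3))} (hS : CycleConvex (GG a b) S)
    (i0 : Fin (a+3)) (j0 : Fin (b+3))
    (hrow : ∀ j, (i0, j) ∈ S) (hcol : ∀ i, (i, j0) ∈ S)
    {w0 : Fin (a+3) × Fin (b+3)} (hw0 : w0 ∉ S) : False := by
  classical
  obtain ⟨w, hwmem, hmax⟩ := Finset.exists_max_image (Sᶜ.toFinset)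
    (fun z => (z.1 - i0).val * (b+3) + (z.2 - j0).val) ⟨w0, by simpa using hw0⟩
  rw [Set.mem_toFinset] at hwmem
  have hw : w ∉ S := hwmem
  set P := (w.1 - i0).val with hP
  set Q := (w.2 - j0).val with hQ
  have hmax' : ∀ z : Fin (a+3) × Fin (b+3), z ∉ S →
      (z.1 - i0).val * (b+3) + (z.2 - j0).val ≤ P * (b+3) + Q := by
    intro z hz
    exact hmax z (by simpa using hz)
  have hPz : ∀ z : Fin (a+3) × Fin (b+3), z ∉ S → (z.1 - i0).val ≤ P := by
    intro z hz
    have h1 := hmax' z hz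
    have h2 : (z.2 - j0).val < b+3 := (z.2 - j0).isLt
    have h3 : Q < b+3 := (w.2 - j0).isLt
    by_contra hcon
    have h4 : (P+1)*(b+3) ≤ (z.1 - i0).val*(b+3) := Nat.mul_le_mul_right _ (by omega)
    have h6 : (P+1)*(b+3) = P*(b+3) + (b+3) := by ring
    linarith
  have hQz : ∀ z : Fin (a+3) × Fin (b+3), z ∉ S → z.1 = w.1 → (z.2 - j0).val ≤ Q := by
    intro z hz hz1
    have h1 := hmax' z hz
    rw [hz1] at h1
    linarith
  have hP1 : 1 ≤ P := by
    rcases Nat.eq_zero_or_pos P with h0 | h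
    · exfalso
      have h1 : w.1 - i0 = 0 := by
        apply Fin.ext
        simpa [← hP] using h0
      have h2 : w.1 = i0 := by linear_combination h1
      exact hw (by rw [show w = (i0, w.2) from Prod.ext h2 rfl]; exact hrow w.2)
    · exact h
  have hQ1 : 1 ≤ Q := by
    rcases Nat.eq_zero_or_pos Q with h0 | h
    · exfalso
      have h1 : w.2 - j0 = 0 := by
        apply Fin.ext
        simpa [← hQ] using h0
      have h2 : w.2 = j0 := by linear_combination h1
      exact hw (by rw [show w = (w.1, j0) from Prod.ext rfl h2]; exact hcol w.1)
    · exact h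
  have hPle : P ≤ a+2 := by have := (w.1 - i0).isLt; omega
  have hQle : Q ≤ b+2 := by have := (w.2 - j0).isLt; omega
  -- d and r are in S
  have hpd : (w.1 + 1 - i0).val = (P + 1) % (a+3) := by
    have h1 : w.1 + 1 - i0 = (w.1 - i0) + ((1:ℕ) : Fin (a+3)) := by push_cast; ring
    rw [h1, fin3_valP]
  have hdS : ((w.1 + 1, w.2) : Fin (a+3) × Fin (b+3)) ∈ S := by
    by_contra h
    rcases Nat.lt_or_ge (P+1) (a+3) with hc | hc
    · have h2 := hPz _ h
      simp only at h2
      rw [hpd, Nat.mod_eq_of_lt hc] at h2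
      omega
    · have h3 : P + 1 = a + 3 := by omega
      have h4 : (w.1 + 1 - i0).val = 0 := by rw [hpd, h3, Nat.mod_self]
      have h5 : w.1 + 1 - i0 = 0 := Fin.ext (by simpa using h4)
      have h6 : w.1 + 1 = i0 := by linear_combination h5
      exact h (by rw [show ((w.1 + 1, w.2) : Fin (a+3) × Fin (b+3)) = (i0, w.2) from Prod.ext h6 rfl]; exact hrow w.2)
  have hqr : (w.2 + 1 - j0).val = (Q + 1) % (b+3) := by
    have h1 : w.2 + 1 - j0 = (w.2 - j0) + ((1:ℕ) : Fin (b+3)) := by push_cast; ring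
    rw [h1, fin3_valP]
  have hrS : ((w.1, w.2 + 1) : Fin (a+3) × Fin (b+3)) ∈ S := by
    by_contra h
    rcases Nat.lt_or_ge (Q+1) (b+3) with hc | hc
    · have h2 := hQz _ h rfl
      simp only at h2
      rw [hqr, Nat.mod_eq_of_lt hc] at h2
      omega
    · have h3 : Q + 1 = b + 3 := by omega
      have h4 : (w.2 + 1 - j0).val = 0 := by rw [hqr, h3, Nat.mod_self]
      have h5 : w.2 + 1 - j0 = 0 := Fin.ext (by simpa using h4)
      have h6 : w.2 + 1 = j0 := by linear_combination h5
      exact h (by rw [show ((w.1, w.2 + 1) : Fin (a+3) × Fin (b+3)) = (w.1, j0) from Prod.ext rfl h6]; exact hcol w.1)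
  have hdr : ((w.1 + 1, w.2) : Fin (a+3) × Fin (b+3)) ≠ (w.1, w.2 + 1) := by
    intro h
    exact fin3_add_one_ne w.1 (congrArg Prod.fst h)
  have hwd : (GG a b).Adj w (w.1 + 1, w.2) := boxProd_adj.mpr (Or.inl ⟨cyc_succ w.1, rfl⟩)
  have hwr : (GG a b).Adj w (w.1, w.2 + 1) := boxProd_adj.mpr (Or.inr ⟨cyc_succ w.2, rfl⟩)
  -- chain 1 : from (w.1+1, w.2) down to (i0, w.2)
  set k1 := (i0 - w.1 - 1).val with hk1
  have hk1le : k1 ≤ a+2 := by have := (i0 - w.1 - 1).isLt; omega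
  have hsum1 : P + (1 + k1) = a + 3 := by
    have h2 : (w.1 - i0) + ((1 + k1 : ℕ) : Fin (a+3)) = 0 := by
      push_cast
      rw [hk1, Fin.cast_val_eq_self]
      ring
    have h1 : ((w.1 - i0) + ((1 + k1 : ℕ) : Fin (a+3))).val = 0 := by rw [h2]; rfl
    rw [fin3_valP] at h1
    exact eq_N_of_mod h1 (by omega) (by omega)
  have hmem1 : ∀ t, t ≤ k1 → ((w.1 + 1 + (t : Fin (a+3)), w.2) : Fin (a+3) × Fin (b+3)) ∈ S := by
    intro t ht
    have hval : (w.1 + 1 + (t : Fin (a+3)) - i0).val = (P + (1 + t)) % (a+3) := by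
      have h1 : w.1 + 1 + (t : Fin (a+3)) - i0 = (w.1 - i0) + ((1 + t : ℕ) : Fin (a+3)) := by
        push_cast; ring
      rw [h1, fin3_valP]
    rcases Nat.lt_or_ge (P + (1 + t)) (a+3) with hc | hc
    · by_contra h
      have h2 := hPz _ h
      simp only at h2
      rw [hval, Nat.mod_eq_of_lt hc] at h2
      omega
    · have h3 : P + (1 + t) = a + 3 := by omega
      have h4 : (w.1 + 1 + (t : Fin (a+3)) - i0).val = 0 := by rw [hval, h3, Nat.mod_self]
      have h5 : w.1 + 1 + (t : Fin (a+3)) = i0 := by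
        have h45 : w.1 + 1 + (t : Fin (a+3)) - i0 = 0 := Fin.ext (by simpa using h4)
        linear_combination h45
      rw [show ((w.1 + 1 + (t : Fin (a+3)), w.2) : Fin (a+3) × Fin (b+3)) = (i0, w.2) from Prod.ext h5 rfl]
      exact hrow w.2
  have hadj1 : ∀ t, t < k1 → (GG a b).Adj (w.1 + 1 + (t : Fin (a+3)), w.2) (w.1 + 1 + ((t+1 : ℕ) : Fin (a+3)), w.2) := by
    intro t _
    refine boxProd_adj.mpr (Or.inl ⟨?_, rfl⟩)
    have h1 : ((t+1 : ℕ) : Fin (a+3)) = (t : Fin (a+3)) + 1 := by push_cast; ring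
    rw [h1, ← add_assoc]
    exact cyc_succ _
  have R1 := reach_chain (G' := GG a b) (S := S)
    (fun t => (w.1 + 1 + (t : Fin (a+3)), w.2)) k1 hmem1 hadj1
  -- chain 2 : along row i0 from (i0, w.2) to (i0, j0)
  set k2 := (j0 - w.2).val with hk2
  have hmem2 : ∀ t, t ≤ k2 → ((i0, w.2 + (t : Fin (b+3))) : Fin (a+3) × Fin (b+3)) ∈ S :=
    fun t _ => hrow _
  have hadj2 : ∀ t, t < k2 → (GG a b).Adj (i0, w.2 + (t : Fin (b+3))) (i0, w.2 + ((t+1 : ℕ) : Fin (b+3))) := by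
    intro t _
    refine boxProd_adj.mpr (Or.inr ⟨?_, rfl⟩)
    have h1 : ((t+1 : ℕ) : Fin (b+3)) = (t : Fin (b+3)) + 1 := by push_cast; ring
    rw [h1, ← add_assoc]
    exact cyc_succ _
  have R2 := reach_chain (G' := GG a b) (S := S)
    (fun t => (i0, w.2 + (t : Fin (b+3)))) k2 hmem2 hadj2
  -- chain 3 : along column j0 from (i0, j0) to (w.1, j0)
  set k3 := (w.1 - i0).val with hk3
  have hmem3 : ∀ t, t ≤ k3 → ((i0 + (t : Fin (a+3)), j0) : Fin (a+3) × Fin (b+3)) ∈ S :=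
    fun t _ => hcol _
  have hadj3 : ∀ t, t < k3 → (GG a b).Adj (i0 + (t : Fin (a+3)), j0) (i0 + ((t+1 : ℕ) : Fin (a+3)), j0) := by
    intro t _
    refine boxProd_adj.mpr (Or.inl ⟨?_, rfl⟩)
    have h1 : ((t+1 : ℕ) : Fin (a+3)) = (t : Fin (a+3)) + 1 := by push_cast; ring
    rw [h1, ← add_assoc]
    exact cyc_succ _
  have R3 := reach_chain (G' := GG a b) (S := S)
    (fun t => (i0 + (t : Fin (a+3)), j0)) k3 hmem3 hadj3
  -- chain 4 : backwards along row w.1 from (w.1, j0) to (w.1, w.2 + 1)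
  set k4 := (j0 - w.2 - 1).val with hk4
  have hk4le : k4 ≤ b+2 := by have := (j0 - w.2 - 1).isLt; omega
  have hsum4 : Q + (1 + k4) = b + 3 := by
    have h2 : (w.2 - j0) + ((1 + k4 : ℕ) : Fin (b+3)) = 0 := by
      push_cast
      rw [hk4, Fin.cast_val_eq_self]
      ring
    have h1 : ((w.2 - j0) + ((1 + k4 : ℕ) : Fin (b+3))).val = 0 := by rw [h2]; rfl
    rw [fin3_valP] at h1
    exact eq_N_of_mod h1 (by omega) (by omega)
  have hmem4 : ∀ t, t ≤ k4 → ((w.1, j0 - (t : Fin (b+3))) : Fin (a+3) × Fin (b+3)) ∈ S := by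
    intro t ht
    rcases Nat.eq_zero_or_pos t with h0 | h0
    · rw [h0]
      rw [show ((w.1, j0 - ((0:ℕ) : Fin (b+3))) : Fin (a+3) × Fin (b+3)) = (w.1, j0) by push_cast; rw [sub_zero]]
      exact hcol w.1
    · by_contra h
      have hq2 := hQz _ h rfl
      simp only at hq2
      have hval : (j0 - (t : Fin (b+3)) - j0).val = (b + 3 - t) % (b+3) := by
        have h1 : j0 - (t : Fin (b+3)) - j0 = (0 : Fin (b+3)) - (t : Fin (b+3)) := by ring
        rw [h1, fin3_valN, Nat.mod_eq_of_lt (show t < b+3 by omega)]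
      rw [hval, Nat.mod_eq_of_lt (by omega)] at hq2
      omega
  have hadj4 : ∀ t, t < k4 → (GG a b).Adj (w.1, j0 - (t : Fin (b+3))) (w.1, j0 - ((t+1 : ℕ) : Fin (b+3))) := by
    intro t _
    refine boxProd_adj.mpr (Or.inr ⟨?_, rfl⟩)
    have h1 : j0 - ((t+1 : ℕ) : Fin (b+3)) = (j0 - (t : Fin (b+3))) - 1 := by push_cast; ring
    rw [h1]
    exact cyc_pred _
  have R4 := reach_chain (G' := GG a b) (S := S)
    (fun t => (w.1, j0 - (t : Fin (b+3)))) k4 hmem4 hadj4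
  -- endpoints
  have e10 : ((w.1 + 1 + ((0:ℕ) : Fin (a+3)), w.2) : Fin (a+3) × Fin (b+3)) = (w.1 + 1, w.2) := by
    push_cast; rw [add_zero]
  have e1k : ((w.1 + 1 + ((k1:ℕ) : Fin (a+3)), w.2) : Fin (a+3) × Fin (b+3)) = (i0, w.2) := by
    refine Prod.ext ?_ rfl
    rw [hk1, Fin.cast_val_eq_self]
    ring
  have e20 : ((i0, w.2 + ((0:ℕ) : Fin (b+3))) : Fin (a+3) × Fin (b+3)) = (i0, w.2) := by
    push_cast; rw [add_zero]
  have e2k : ((i0, w.2 + ((k2:ℕ) : Fin (b+3))) : Fin (a+3) × Fin (b+3)) = (i0, j0) := by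
    refine Prod.ext rfl ?_
    rw [hk2, Fin.cast_val_eq_self]
    ring
  have e30 : ((i0 + ((0:ℕ) : Fin (a+3)), j0) : Fin (a+3) × Fin (b+3)) = (i0, j0) := by
    push_cast; rw [add_zero]
  have e3k : ((i0 + ((k3:ℕ) : Fin (a+3)), j0) : Fin (a+3) × Fin (b+3)) = (w.1, j0) := by
    refine Prod.ext ?_ rfl
    rw [hk3, Fin.cast_val_eq_self]
    ring
  have e40 : ((w.1, j0 - ((0:ℕ) : Fin (b+3))) : Fin (a+3) × Fin (b+3)) = (w.1, j0) := by
    push_cast; rw [sub_zero]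
  have e4k : ((w.1, j0 - ((k4:ℕ) : Fin (b+3))) : Fin (a+3) × Fin (b+3)) = (w.1, w.2 + 1) := by
    refine Prod.ext rfl ?_
    rw [hk4, Fin.cast_val_eq_self]
    ring
  rw [show (⟨_, hmem1 0 (Nat.zero_le _)⟩ : ↥S) = ⟨(w.1 + 1, w.2), hdS⟩ from Subtype.ext e10,
      show (⟨_, hmem1 k1 le_rfl⟩ : ↥S) = ⟨(i0, w.2), hrow w.2⟩ from Subtype.ext e1k] at R1
  rw [show (⟨_, hmem2 0 (Nat.zero_le _)⟩ : ↥S) = ⟨(i0, w.2), hrow w.2⟩ from Subtype.ext e20,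
      show (⟨_, hmem2 k2 le_rfl⟩ : ↥S) = ⟨(i0, j0), hrow j0⟩ from Subtype.ext e2k] at R2
  rw [show (⟨_, hmem3 0 (Nat.zero_le _)⟩ : ↥S) = ⟨(i0, j0), hrow j0⟩ from Subtype.ext e30,
      show (⟨_, hmem3 k3 le_rfl⟩ : ↥S) = ⟨(w.1, j0), hcol w.1⟩ from Subtype.ext e3k] at R3
  rw [show (⟨_, hmem4 0 (Nat.zero_le _)⟩ : ↥S) = ⟨(w.1, j0), hcol w.1⟩ from Subtype.ext e40,
      show (⟨_, hmem4 k4 le_rfl⟩ : ↥S) = ⟨(w.1, w.2 + 1), hrS⟩ from Subtype.ext e4k] at R4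
  exact cycleConvex_not_reach hS hw hdS hrS hdr hwd hwr (R1.trans (R2.trans (R3.trans R4)))


lemma main_lower {S : Set (Fin (a+3) × Fin (b+3))} (hS : CycleConvex (GG a b) S)
    (hne : S ≠ Set.univ) :
    2*(a+3) ≤ Sᶜ.ncard ∨ 2*(b+3) ≤ Sᶜ.ncard := by
  classical
  obtain ⟨w0, hw0⟩ := (Set.ne_univ_iff_exists_notMem S).mp hne
  by_cases hall : ∀ i : Fin (a+3), ∃ z : Fin (a+3) × Fin (b+3), z ∉ S ∧ z.1 = i
  · left
    have h2 : ∀ i : Fin (a+3), 2 ≤ (Sᶜ.toFinset.filter (fun v => v.1 = i)).card := by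
      intro i
      obtain ⟨z, hz, hz1⟩ := hall i
      have hz' : ¬ (∀ z', z' ∉ S → z'.1 = z.1 → z' = z) := fun hone => row_single hS hz hone
      push_neg at hz'
      obtain ⟨z', hz'1, hz'2, hz'3⟩ := hz'
      refine Finset.one_lt_card.mpr ⟨z, ?_, z', ?_, fun h => hz'3 h.symm⟩
      · simp only [Finset.mem_filter, Set.mem_toFinset, Set.mem_compl_iff]
        exact ⟨hz, hz1⟩
      · simp only [Finset.mem_filter, Set.mem_toFinset, Set.mem_compl_iff]
        exact ⟨hz'1, by rw [hz'2, hz1]⟩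
    calc 2*(a+3) = ∑ _i : Fin (a+3), 2 := by
          rw [Finset.sum_const, Finset.card_univ, Fintype.card_fin, smul_eq_mul]; ring
      _ ≤ ∑ i : Fin (a+3), (Sᶜ.toFinset.filter (fun v => v.1 = i)).card :=
          Finset.sum_le_sum (fun i _ => h2 i)
      _ = Sᶜ.toFinset.card :=
          (Finset.card_eq_sum_card_fiberwise (fun x _ => Finset.mem_univ _)).symm
      _ = Sᶜ.ncard := (Set.ncard_eq_toFinset_card' _).symm
  · right
    push_neg at hall
    obtain ⟨i0, hi0⟩ := hall
    have hrow : ∀ j, (i0, j) ∈ S := by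
      intro j
      by_contra h
      exact hi0 (i0, j) h rfl
    have h2 : ∀ j : Fin (b+3), 2 ≤ (Sᶜ.toFinset.filter (fun v => v.2 = j)).card := by
      intro j
      have hne2 : ∃ z : Fin (a+3) × Fin (b+3), z ∉ S ∧ z.2 = j := by
        by_contra h
        push_neg at h
        have hcol : ∀ i, (i, j) ∈ S := by
          intro i
          by_contra hh
          exact h (i, j) hh rfl
        exact cross_lemma hS i0 j hrow hcol hw0
      obtain ⟨z, hz, hz2⟩ := hne2
      have hz' : ¬ (∀ z', z' ∉ S → z'.2 = z.2 → z' = z) := fun hone => col_single hS hz hone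
      push_neg at hz'
      obtain ⟨z', hz'1, hz'2, hz'3⟩ := hz'
      refine Finset.one_lt_card.mpr ⟨z, ?_, z', ?_, fun h => hz'3 h.symm⟩
      · simp only [Finset.mem_filter, Set.mem_toFinset, Set.mem_compl_iff]
        exact ⟨hz, hz2⟩
      · simp only [Finset.mem_filter, Set.mem_toFinset, Set.mem_compl_iff]
        exact ⟨hz'1, by rw [hz'2, hz2]⟩
    calc 2*(b+3) = ∑ _j : Fin (b+3), 2 := by
          rw [Finset.sum_const, Finset.card_univ, Fintype.card_fin, smul_eq_mul]; ring
      _ ≤ ∑ j : Fin (b+3), (Sᶜ.toFinset.filter (fun v => v.2 = j)).card :=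
          Finset.sum_le_sum (fun j _ => h2 j)
      _ = Sᶜ.toFinset.card :=
          (Finset.card_eq_sum_card_fiberwise (fun x _ => Finset.mem_univ _)).symm
      _ = Sᶜ.ncard := (Set.ncard_eq_toFinset_card' _).symm


lemma neg_one_props : ((0:Fin (b+3)) - 1 ≠ 0) ∧ ((0:Fin (b+3)) - 1 ≠ 1) := by
  constructor <;> intro h <;> have hv := congrArg Fin.val h <;>
    rw [Fin.sub_def] at hv <;> simp [Fin.val_one, Nat.mod_eq_of_lt] at hv <;> omega

lemma two_props : ((1:Fin (b+3)) + 1 ≠ 0) ∧ ((1:Fin (b+3)) + 1 ≠ 1) := by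
  constructor <;> intro h <;> have hv := congrArg Fin.val h <;>
    rw [Fin.val_add] at hv <;> simp [Fin.val_one, Nat.mod_eq_of_lt] at hv

lemma construct_cols :
    ∃ S : Set (Fin (a+3) × Fin (b+3)), S.ncard = (a+3)*(b+1) ∧ CycleConvex (GG a b) S
      ∧ S ≠ Set.univ := by
  classical
  set A : Set (Fin (b+3)) := {j | j ≠ 0 ∧ j ≠ 1} with hA
  set S : Set (Fin (a+3) × Fin (b+3)) := {v | v.2 ≠ 0 ∧ v.2 ≠ 1} with hSdef
  refine ⟨S, ?_, ?_, ?_⟩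
  · -- cardinality
    rw [Set.ncard_eq_toFinset_card']
    have hfin : S.toFinset = Finset.univ ×ˢ (Finset.univ \ ({0,1} : Finset (Fin (b+3)))) := by
      ext v
      simp only [Set.mem_toFinset, hSdef, Set.mem_setOf_eq, Finset.mem_product,
        Finset.mem_univ, Finset.mem_sdiff, Finset.mem_insert, Finset.mem_singleton, true_and]
      tauto
    rw [hfin, Finset.card_product, Finset.card_sdiff_of_subset (by intro x hx; exact Finset.mem_univ x)]
    rw [Finset.card_insert_of_notMem (by simp), Finset.card_singleton]
    simp [Finset.card_univ]
  · -- CycleConvex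
    intro w hw c hc
    simp only [hSdef, Set.mem_setOf_eq, not_and_or, not_not] at hw
    have huniq : ∃ u : Fin (a+3) × Fin (b+3), u ∈ S ∧
        (∀ x : Fin (a+3) × Fin (b+3), x ∈ insert w S → (GG a b).Adj w x → x = u) := by
      rcases hw with hw2 | hw2
      · refine ⟨(w.1, w.2 - 1), ?_, ?_⟩
        · rw [hw2]
          exact ⟨neg_one_props.1, neg_one_props.2⟩
        · intro x hx hadj
          rcases boxProd_adj.mp hadj with ⟨hfst, hsnd⟩ | ⟨hsnd, hfst⟩
          · exfalso
            have hxS : x ∉ S := by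
              simp only [hSdef, Set.mem_setOf_eq, not_and_or, not_not]
              left; rw [← hsnd, hw2]
            have hxw : x = w := by
              rcases Set.mem_insert_iff.mp hx with h | h
              · exact h
              · exact absurd h hxS
            rw [hxw] at hfst
            exact (cycleGraph (a+3)).irrefl hfst
          · rcases cycleGraph_adj.mp hsnd with h1 | h1
            · -- w.2 - x.2 = 1, so x.2 = w.2 - 1
              have hx2 : x.2 = w.2 - 1 := by linear_combination -h1
              exact Prod.ext hfst.symm hx2
            · -- x.2 - w.2 = 1, so x.2 = w.2 + 1 = 1, not in S, so x = w, contradiction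
              exfalso
              have hx2 : x.2 = w.2 + 1 := by linear_combination h1
              have hxS : x ∉ S := by
                simp only [hSdef, Set.mem_setOf_eq, not_and_or, not_not]
                right; rw [hx2, hw2, zero_add]
              have hxw : x = w := by
                rcases Set.mem_insert_iff.mp hx with h | h
                · exact h
                · exact absurd h hxS
              rw [hxw, hw2] at hx2
              exact fin3_add_one_ne 0 hx2.symm
      · refine ⟨(w.1, w.2 + 1), ?_, ?_⟩
        · rw [hw2]
          exact ⟨two_props.1, two_props.2⟩
        · intro x hx hadj
          rcases boxProd_adj.mp hadj with ⟨hfst, hsnd⟩ | ⟨hsnd, hfst⟩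
          · exfalso
            have hxS : x ∉ S := by
              simp only [hSdef, Set.mem_setOf_eq, not_and_or, not_not]
              right; rw [← hsnd, hw2]
            have hxw : x = w := by
              rcases Set.mem_insert_iff.mp hx with h | h
              · exact h
              · exact absurd h hxS
            rw [hxw] at hfst
            exact (cycleGraph (a+3)).irrefl hfst
          · rcases cycleGraph_adj.mp hsnd with h1 | h1
            · -- w.2 - x.2 = 1, x.2 = w.2 - 1 = 0, not in S
              exfalso
              have hx2 : x.2 = w.2 - 1 := by linear_combination -h1
              have hx20 : x.2 = 0 := by rw [hx2, hw2]; ring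
              have hxS : x ∉ S := by
                simp only [hSdef, Set.mem_setOf_eq, not_and_or, not_not]
                left; exact hx20
              have hxw : x = w := by
                rcases Set.mem_insert_iff.mp hx with h | h
                · exact h
                · exact absurd h hxS
              rw [hxw, hw2] at hx20
              exact one_ne_zero hx20
            · have hx2 : x.2 = w.2 + 1 := by linear_combination h1
              exact Prod.ext hfst.symm hx2
    obtain ⟨u, huS, hu⟩ := huniq
    have huI : u ∈ insert w S := Set.mem_insert_of_mem w huS
    refine no_cycle_of_unique_nbr (u := ⟨u, huI⟩) ?_ c hc
    rintro ⟨x, hx⟩ hadj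
    have hadj' : (GG a b).Adj w x := hadj
    exact Subtype.ext (hu x hx hadj')
  · -- not univ
    intro h
    have : ((0,0) : Fin (a+3) × Fin (b+3)) ∈ S := h ▸ Set.mem_univ _
    simp [hSdef] at this


lemma construct_rows :
    ∃ S : Set (Fin (a+3) × Fin (b+3)), S.ncard = (a+1)*(b+3) ∧ CycleConvex (GG a b) S
      ∧ S ≠ Set.univ := by
  classical
  set S : Set (Fin (a+3) × Fin (b+3)) := {v | v.1 ≠ 0 ∧ v.1 ≠ 1} with hSdef
  refine ⟨S, ?_, ?_, ?_⟩
  · rw [Set.ncard_eq_toFinset_card']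
    have hfin : S.toFinset = (Finset.univ \ ({0,1} : Finset (Fin (a+3)))) ×ˢ Finset.univ := by
      ext v
      simp only [Set.mem_toFinset, hSdef, Set.mem_setOf_eq, Finset.mem_product,
        Finset.mem_univ, Finset.mem_sdiff, Finset.mem_insert, Finset.mem_singleton, and_true]
      tauto
    rw [hfin, Finset.card_product, Finset.card_sdiff_of_subset (by intro x hx; exact Finset.mem_univ x)]
    rw [Finset.card_insert_of_notMem (by simp), Finset.card_singleton]
    simp [Finset.card_univ]
  · intro w hw c hc
    simp only [hSdef, Set.mem_setOf_eq, not_and_or, not_not] at hw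
    have huniq : ∃ u : Fin (a+3) × Fin (b+3), u ∈ S ∧
        (∀ x : Fin (a+3) × Fin (b+3), x ∈ insert w S → (GG a b).Adj w x → x = u) := by
      rcases hw with hw2 | hw2
      · refine ⟨(w.1 - 1, w.2), ?_, ?_⟩
        · rw [hw2]
          exact ⟨(neg_one_props (b := a)).1, (neg_one_props (b := a)).2⟩
        · intro x hx hadj
          rcases boxProd_adj.mp hadj with ⟨hfst, hsnd⟩ | ⟨hsnd, hfst⟩
          · rcases cycleGraph_adj.mp hfst with h1 | h1
            · have hx1 : x.1 = w.1 - 1 := by linear_combination -h1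
              exact Prod.ext hx1 hsnd.symm
            · exfalso
              have hx1 : x.1 = w.1 + 1 := by linear_combination h1
              have hxS : x ∉ S := by
                simp only [hSdef, Set.mem_setOf_eq, not_and_or, not_not]
                right; rw [hx1, hw2, zero_add]
              have hxw : x = w := by
                rcases Set.mem_insert_iff.mp hx with h | h
                · exact h
                · exact absurd h hxS
              rw [hxw, hw2] at hx1
              exact fin3_add_one_ne 0 hx1.symm
          · exfalso
            have hxS : x ∉ S := by
              simp only [hSdef, Set.mem_setOf_eq, not_and_or, not_not]
              left; rw [← hfst, hw2]
            have hxw : x = w := by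
              rcases Set.mem_insert_iff.mp hx with h | h
              · exact h
              · exact absurd h hxS
            rw [hxw] at hsnd
            exact (cycleGraph (b+3)).irrefl hsnd
      · refine ⟨(w.1 + 1, w.2), ?_, ?_⟩
        · rw [hw2]
          exact ⟨(two_props (b := a)).1, (two_props (b := a)).2⟩
        · intro x hx hadj
          rcases boxProd_adj.mp hadj with ⟨hfst, hsnd⟩ | ⟨hsnd, hfst⟩
          · rcases cycleGraph_adj.mp hfst with h1 | h1
            · exfalso
              have hx1 : x.1 = w.1 - 1 := by linear_combination -h1
              have hx10 : x.1 = 0 := by rw [hx1, hw2]; ring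
              have hxS : x ∉ S := by
                simp only [hSdef, Set.mem_setOf_eq, not_and_or, not_not]
                left; exact hx10
              have hxw : x = w := by
                rcases Set.mem_insert_iff.mp hx with h | h
                · exact h
                · exact absurd h hxS
              rw [hxw, hw2] at hx10
              exact one_ne_zero hx10
            · have hx1 : x.1 = w.1 + 1 := by linear_combination h1
              exact Prod.ext hx1 hsnd.symm
          · exfalso
            have hxS : x ∉ S := by
              simp only [hSdef, Set.mem_setOf_eq, not_and_or, not_not]
              right; rw [← hfst, hw2]
            have hxw : x = w := by
              rcases Set.mem_insert_iff.mp hx with h | h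
              · exact h
              · exact absurd h hxS
            rw [hxw] at hsnd
            exact (cycleGraph (b+3)).irrefl hsnd
    obtain ⟨u, huS, hu⟩ := huniq
    have huI : u ∈ insert w S := Set.mem_insert_of_mem w huS
    refine no_cycle_of_unique_nbr (u := ⟨u, huI⟩) ?_ c hc
    rintro ⟨x, hx⟩ hadj
    have hadj' : (GG a b).Adj w x := hadj
    exact Subtype.ext (hu x hx hadj')
  · intro h
    have : ((0,0) : Fin (a+3) × Fin (b+3)) ∈ S := h ▸ Set.mem_univ _
    simp [hSdef] at this

end Torus

theorem stmt_17 (m n : ℕ) (hm : 3 ≤ m) (hn : 3 ≤ n) :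
    cycleConvexityNumber (cycleGraph m □ cycleGraph n) =
      max (m * n - 2 * n) (m * n - 2 * m) := by
  obtain ⟨a, rfl⟩ : ∃ a, m = a + 3 := ⟨m - 3, by omega⟩
  obtain ⟨b, rfl⟩ : ∃ b, n = b + 3 := ⟨n - 3, by omega⟩
  have hcardV : Nat.card (Fin (a+3) × Fin (b+3)) = (a+3)*(b+3) := by
    simp [Nat.card_eq_fintype_card]
  rw [cycleConvexityNumber]
  apply le_antisymm
  · apply csSup_le'
    rintro k ⟨S, hcard, hcc, hneq⟩
    have hcompl := main_lower hcc hneq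
    have htot : S.ncard + Sᶜ.ncard = (a+3)*(b+3) := by
      rw [Set.ncard_add_ncard_compl, hcardV]
    rcases hcompl with h | h
    · refine le_trans ?_ (le_max_right _ _)
      have h5 : k + 2*(a+3) ≤ (a+3)*(b+3) := by
        rw [← hcard, ← htot]
        exact Nat.add_le_add_left h _
      exact Nat.le_sub_of_add_le h5
    · refine le_trans ?_ (le_max_left _ _)
      have h5 : k + 2*(b+3) ≤ (a+3)*(b+3) := by
        rw [← hcard, ← htot]
        exact Nat.add_le_add_left h _
      exact Nat.le_sub_of_add_le h5
  · apply le_csSup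
    · refine ⟨(a+3)*(b+3), ?_⟩
      rintro k ⟨S, hcard, -, -⟩
      rw [← hcard]
      calc S.ncard ≤ (Set.univ : Set (Fin (a+3) × Fin (b+3))).ncard :=
            Set.ncard_le_ncard (Set.subset_univ S) Set.finite_univ
        _ = (a+3)*(b+3) := by rw [Set.ncard_univ, hcardV]
    · rcases le_total a b with hab | hab
      · obtain ⟨S, hcard, hcc, hne⟩ := construct_cols (a := a) (b := b)
        refine ⟨S, ?_, hcc, hne⟩
        rw [hcard]
        have hmax : max ((a+3)*(b+3) - 2*(b+3)) ((a+3)*(b+3) - 2*(a+3))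
            = (a+3)*(b+3) - 2*(a+3) := max_eq_right (Nat.sub_le_sub_left (by omega) _)
        rw [hmax, show (a+3)*(b+3) = (a+3)*(b+1) + 2*(a+3) from by ring, Nat.add_sub_cancel]
      · obtain ⟨S, hcard, hcc, hne⟩ := construct_rows (a := a) (b := b)
        refine ⟨S, ?_, hcc, hne⟩
        rw [hcard]
        have hmax : max ((a+3)*(b+3) - 2*(b+3)) ((a+3)*(b+3) - 2*(a+3))
            = (a+3)*(b+3) - 2*(b+3) := max_eq_left (Nat.sub_le_sub_left (by omega) _)
        rw [hmax, show (a+3)*(b+3) = (a+1)*(b+3) + 2*(b+3) from by ring, Nat.add_sub_cancel]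
end

section
/- For any trees T_m and T_n on m ≥ 2 and n ≥ 2 vertices respectively, the cycle convexity number of the Cartesian product satisfies C_cc(T_m □ T_n) = max{mn − n, mn − m}. -/
open SimpleGraph

variable {V α β : Type*}

/-!
Removing a leaf layer `{a₀} × T_n` (or `T_m × {b₀}`) from `T_m □ T_n` leaves a cycle convex
set: each removed vertex has only one neighbour outside the layer. Conversely let `S` be proper
and cycle convex. For `w ∉ S` and a unit square `w, (a', b), (a', b'), (a, b')` of the product,
the square is a cycle through `w`, so another corner lies outside `S`. Walking from any vertex
of `Sᶜ` towards a fixed target `(a₀, b₀)` in this way, `Sᶜ` meets the row of `a₀` or the column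
of `b₀`; as the target is arbitrary, `Sᶜ` projects onto one of the factors, so
`|Sᶜ| ≥ min m n`.
-/

namespace SimpleGraph

variable {G : SimpleGraph V}

lemma Walk.IsCycle.exists_adj_adj_ne {u : V} {c : G.Walk u u} (hc : c.IsCycle) :
    ∃ x y, G.Adj u x ∧ G.Adj u y ∧ x ≠ y :=
  ⟨c.snd, c.penultimate, c.adj_snd hc.not_nil, (c.adj_penultimate hc.not_nil).symm,
    hc.snd_ne_penultimate⟩

lemma Walk.exists_isCycle_of_square {w x y z : V} (hwx : G.Adj w x) (hxy : G.Adj x y)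
    (hyz : G.Adj y z) (hzw : G.Adj z w) (hwy : w ≠ y) (hxz : x ≠ z) :
    ∃ c : G.Walk w w, c.IsCycle := by
  refine ⟨.cons hwx (.cons hxy (.cons hyz (.cons hzw .nil))), ?_⟩
  have := hwx.ne; have := hxy.ne; have := hyz.ne; have := hzw.ne
  simp_all [Walk.cons_isCycle_iff, Walk.cons_isPath_iff, eq_comm]

lemma Connected.exists_adj_dist_lt (hG : G.Connected) {u v : V} (huv : u ≠ v) :
    ∃ u', G.Adj u u' ∧ G.dist u' v < G.dist u v := by
  obtain ⟨p, hp⟩ := hG.exists_walk_length_eq_dist u v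
  cases p with
  | nil => exact absurd rfl huv
  | cons h q =>
    refine ⟨_, h, ?_⟩
    have := dist_le q
    rw [Walk.length_cons] at hp
    omega

lemma IsTree.exists_forall_adj_eq [Fintype V] [Nontrivial V] (hG : G.IsTree) :
    ∃ v w, ∀ y, G.Adj v y → y = w := by
  classical
  obtain ⟨v, hv⟩ := hG.exists_vert_degree_one_of_nontrivial
  obtain ⟨w, -, hw⟩ := degree_eq_one_iff_existsUnique_adj.mp hv
  exact ⟨v, w, hw⟩

end SimpleGraph

section CycleConvex

variable {G : SimpleGraph V} {S : Set V}

lemma cycleConvex_of_forall_notMem_adj_eq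
    (h : ∀ w ∉ S, ∃ z, ∀ y ∈ S, G.Adj w y → y = z) : CycleConvex G S := by
  intro w hw c hc
  obtain ⟨x, y, hx, hy, hxy⟩ := hc.exists_adj_adj_ne
  obtain ⟨z, hz⟩ := h w hw
  have mem_of_adj : ∀ x : ↥(insert w S), G.Adj w x → (x : V) ∈ S := fun x hx =>
    (Set.mem_insert_iff.mp x.2).resolve_left hx.ne'
  exact hxy (Subtype.ext ((hz x (mem_of_adj x hx) hx).trans (hz y (mem_of_adj y hy) hy).symm))

lemma CycleConvex.notMem_or_notMem_or_notMem_of_square (hS : CycleConvex G S) {w x y z : V}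
    (hw : w ∉ S) (hwx : G.Adj w x) (hxy : G.Adj x y) (hyz : G.Adj y z) (hzw : G.Adj z w)
    (hwy : w ≠ y) (hxz : x ≠ z) : x ∉ S ∨ y ∉ S ∨ z ∉ S := by
  by_contra! h
  obtain ⟨hx, hy, hz⟩ := h
  have mem : ∀ {v}, v ∈ S → v ∈ insert w S := Set.mem_insert_of_mem w
  obtain ⟨c, hc⟩ := SimpleGraph.Walk.exists_isCycle_of_square
    (G := G.induce (insert w S)) (w := ⟨w, Set.mem_insert w S⟩) (x := ⟨x, mem hx⟩)
    (y := ⟨y, mem hy⟩) (z := ⟨z, mem hz⟩) hwx hxy hyz hzw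
    (by simpa using hwy) (by simpa using hxz)
  exact hS w hw c hc

end CycleConvex

section BoxProd

variable {G : SimpleGraph α} {H : SimpleGraph β}

lemma cycleConvex_boxProd_setOf_fst_ne {a₀ a₁ : α} (ha : ∀ a, G.Adj a₀ a → a = a₁) :
    CycleConvex (G □ H) {p | p.1 ≠ a₀} := by
  refine cycleConvex_of_forall_notMem_adj_eq fun w hw => ⟨(a₁, w.2), fun y hy hwy => ?_⟩
  rw [Set.mem_ofPred_eq, not_not] at hw
  rcases boxProd_adj.mp hwy with ⟨hadj, h2⟩ | ⟨-, h1⟩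
  · rw [← ha _ (hw ▸ hadj), h2]
  · exact absurd (hw ▸ h1.symm) hy

lemma cycleConvex_boxProd_setOf_snd_ne {b₀ b₁ : β} (hb : ∀ b, H.Adj b₀ b → b = b₁) :
    CycleConvex (G □ H) {p | p.2 ≠ b₀} := by
  refine cycleConvex_of_forall_notMem_adj_eq fun w hw => ⟨(w.1, b₁), fun y hy hwy => ?_⟩
  rw [Set.mem_ofPred_eq, not_not] at hw
  rcases boxProd_adj.mp hwy with ⟨-, h2⟩ | ⟨hadj, h1⟩
  · exact absurd (hw ▸ h2.symm) hy
  · rw [← hb _ (hw ▸ hadj), h1]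

lemma ncard_setOf_fst_ne [Finite α] [Finite β] (a₀ : α) :
    {p : α × β | p.1 ≠ a₀}.ncard = Nat.card α * Nat.card β - Nat.card β := by
  have : {p : α × β | p.1 ≠ a₀} = {a₀}ᶜ ×ˢ Set.univ := by ext; simp
  rw [this, Set.ncard_prod, Set.ncard_compl, Set.ncard_singleton, Set.ncard_univ, Nat.sub_one_mul]

lemma ncard_setOf_snd_ne [Finite α] [Finite β] (b₀ : β) :
    {p : α × β | p.2 ≠ b₀}.ncard = Nat.card α * Nat.card β - Nat.card α := by
  have : {p : α × β | p.2 ≠ b₀} = Set.univ ×ˢ {b₀}ᶜ := by ext; simp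
  rw [this, Set.ncard_prod, Set.ncard_compl, Set.ncard_singleton, Set.ncard_univ, Nat.mul_sub_one]

variable {S : Set (α × β)}

lemma CycleConvex.exists_notMem_fst_eq_or_snd_eq (hS : CycleConvex (G □ H) S)
    (hG : G.Connected) (hH : H.Connected) (a₀ : α) (b₀ : β) {p : α × β} (hp : p ∉ S) :
    ∃ q ∉ S, q.1 = a₀ ∨ q.2 = b₀ := by
  induction hk : G.dist p.1 a₀ + H.dist p.2 b₀ using Nat.strong_induction_on generalizing p with
  | _ k ih =>
  obtain ⟨a, b⟩ := p
  by_cases ha : a = a₀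
  · exact ⟨_, hp, .inl ha⟩
  by_cases hb : b = b₀
  · exact ⟨_, hp, .inr hb⟩
  obtain ⟨a', ha', hda⟩ := hG.exists_adj_dist_lt ha
  obtain ⟨b', hb', hdb⟩ := hH.exists_adj_dist_lt hb
  have square := hS.notMem_or_notMem_or_notMem_of_square
    (w := (a, b)) (x := (a', b)) (y := (a', b')) (z := (a, b')) hp
    (boxProd_adj.mpr (.inl ⟨ha', rfl⟩)) (boxProd_adj.mpr (.inr ⟨hb', rfl⟩))
    (boxProd_adj.mpr (.inl ⟨ha'.symm, rfl⟩)) (boxProd_adj.mpr (.inr ⟨hb'.symm, rfl⟩))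
    (by simp [ha'.ne]) (by simp [ha'.ne'])
  rcases square with hq | hq | hq <;> exact ih _ (by dsimp only at hk ⊢; omega) hq rfl

lemma CycleConvex.fst_image_compl_eq_univ_or_snd_image_compl_eq_univ
    (hS : CycleConvex (G □ H) S) (hG : G.Connected) (hH : H.Connected) (hne : S ≠ Set.univ) :
    Prod.fst '' Sᶜ = Set.univ ∨ Prod.snd '' Sᶜ = Set.univ := by
  by_contra! h
  obtain ⟨a₀, ha₀⟩ := (Set.ne_univ_iff_exists_notMem _).mp h.1
  obtain ⟨b₀, hb₀⟩ := (Set.ne_univ_iff_exists_notMem _).mp h.2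
  obtain ⟨p, hp⟩ := Set.nonempty_compl.mpr hne
  obtain ⟨q, hq, rfl | rfl⟩ := hS.exists_notMem_fst_eq_or_snd_eq hG hH a₀ b₀ hp
  exacts [ha₀ ⟨q, hq, rfl⟩, hb₀ ⟨q, hq, rfl⟩]

lemma CycleConvex.ncard_le_boxProd [Finite α] [Finite β] (hS : CycleConvex (G □ H) S)
    (hG : G.Connected) (hH : H.Connected) (hne : S ≠ Set.univ) :
    S.ncard ≤
      max (Nat.card α * Nat.card β - Nat.card β) (Nat.card α * Nat.card β - Nat.card α) := by
  have hsum : S.ncard + Sᶜ.ncard = Nat.card α * Nat.card β := by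
    rw [Set.ncard_add_ncard_compl, Nat.card_prod]
  rcases hS.fst_image_compl_eq_univ_or_snd_image_compl_eq_univ hG hH hne with h | h
  · have := Set.ncard_image_le (f := Prod.fst) (s := Sᶜ)
    rw [h, Set.ncard_univ] at this
    omega
  · have := Set.ncard_image_le (f := Prod.snd) (s := Sᶜ)
    rw [h, Set.ncard_univ] at this
    omega

end BoxProd

theorem stmt_18 [Fintype α] [Fintype β] (Tm : SimpleGraph α) (Tn : SimpleGraph β)
    (h₁ : Tm.IsTree) (h₂ : Tn.IsTree) (m n : ℕ)
    (hm : Fintype.card α = m) (hn : Fintype.card β = n) (hm2 : 2 ≤ m) (hn2 : 2 ≤ n) :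
    cycleConvexityNumber (Tm □ Tn) = max (m * n - n) (m * n - m) := by
  have : Nontrivial α := Fintype.one_lt_card_iff_nontrivial.mp (by omega)
  have : Nontrivial β := Fintype.one_lt_card_iff_nontrivial.mp (by omega)
  obtain ⟨a₀, a₁, ha⟩ := h₁.exists_forall_adj_eq
  obtain ⟨b₀, b₁, hb⟩ := h₂.exists_forall_adj_eq
  rw [← Nat.card_eq_fintype_card] at hm hn
  subst hm hn
  refine IsGreatest.csSup_eq ⟨?_, ?_⟩
  · rcases max_choice (Nat.card α * Nat.card β - Nat.card β)
      (Nat.card α * Nat.card β - Nat.card α) with h | h <;> rw [h]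
    · exact ⟨_, ncard_setOf_fst_ne a₀, cycleConvex_boxProd_setOf_fst_ne ha,
        (Set.ne_univ_iff_exists_notMem _).mpr ⟨(a₀, b₀), by simp⟩⟩
    · exact ⟨_, ncard_setOf_snd_ne b₀, cycleConvex_boxProd_setOf_snd_ne hb,
        (Set.ne_univ_iff_exists_notMem _).mpr ⟨(a₀, b₀), by simp⟩⟩
  · rintro _ ⟨S, rfl, hS, hne⟩
    exact hS.ncard_le_boxProd h₁.connected h₂.connected hne
end
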